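/- arXiv:1902.08223 — 7 statements merged into one kernel-verified Lean document; each statement's English description precedes it below -/
import Mathlib

section
/- If a Young diagram Y with z steps admits an (i,j)-local cover by generalized rectangles, then it admits an (i,j)-local cover consisting of exactly z generalized rectangles. -/
open scoped Classical

/-- The staircase Young diagram `Y_z = {(s,t) ∈ [z]×[z] : s+t ≤ z+1}`. -/
def Yd (z : ℕ) : Set (ℕ × ℕ) :=
  {p | p.1 ∈ Set.Icc 1 z ∧ p.2 ∈ Set.Icc 1 z ∧ p.1 + p.2 ≤ z + 1}

/-- A Young diagram with `r` rows and `c` columns: a down-left closed subset of `[r]×[c]`. -/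
def IsYoung (r c : ℕ) (Y : Set (ℕ × ℕ)) : Prop :=
  Y ⊆ Set.Icc 1 r ×ˢ Set.Icc 1 c ∧
  ∀ p ∈ Y, (2 ≤ p.1 → (p.1 - 1, p.2) ∈ Y) ∧ (2 ≤ p.2 → (p.1, p.2 - 1) ∈ Y)

/-- A step of `Y`: an element whose right and upper neighbours are outside `Y`. -/
def IsStep (Y : Set (ℕ × ℕ)) (p : ℕ × ℕ) : Prop :=
  p ∈ Y ∧ (p.1 + 1, p.2) ∉ Y ∧ (p.1, p.2 + 1) ∉ Y

def steps (Y : Set (ℕ × ℕ)) : Set (ℕ × ℕ) := {p | IsStep Y p}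

/-- A generalized rectangle in `Y`: a product set contained in `Y`. -/
def IsRect (Y R : Set (ℕ × ℕ)) : Prop :=
  (∃ S T : Set ℕ, R = S ×ˢ T) ∧ R ⊆ Y

/-- An actual rectangle in `Y`: a product of intervals contained in `Y`. -/
def IsActualRect (Y R : Set (ℕ × ℕ)) : Prop :=
  (∃ a b u v : ℕ, R = Set.Icc a b ×ˢ Set.Icc u v) ∧ R ⊆ Y

def UsesRow (R : Set (ℕ × ℕ)) (s : ℕ) : Prop := ∃ t, (s, t) ∈ R
def UsesCol (R : Set (ℕ × ℕ)) (t : ℕ) : Prop := ∃ s, (s, t) ∈ R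

/-- A cover of `Y` by generalized rectangles. -/
def IsCover (Y : Set (ℕ × ℕ)) (C : Finset (Set (ℕ × ℕ))) : Prop :=
  (∀ R ∈ C, IsRect Y R) ∧ (⋃ R ∈ C, R) = Y

/-- `(i,j)`-locality: each row used by at most `i`, each column by at most `j` rectangles. -/
def IsLocal (i j : ℕ) (C : Finset (Set (ℕ × ℕ))) : Prop :=
  (∀ s, (C.filter (fun R => UsesRow R s)).card ≤ i) ∧
  (∀ t, (C.filter (fun R => UsesCol R t)).card ≤ j)

def IsLocalCover (i j : ℕ) (Y : Set (ℕ × ℕ)) (C : Finset (Set (ℕ × ℕ))) : Prop :=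
  IsCover Y C ∧ IsLocal i j C

/-!
Every nonempty generalized rectangle `S ×ˢ T ⊆ Y` is dominated by a step: by any step above its
corner `(max S, max T)`, which lies in the rectangle. Assign to each rectangle of the cover a
dominating step `p`, and replace the rectangles assigned to `p` by the product of all their rows
with all their columns. This product still lies below `p`, hence in `Y`, and each of its rows and
columns is one of an assigned rectangle, so the new cover is as local as the old one. A rectangle
containing a step can only be dominated by that step, so each step lies in its own merged
rectangle; hence the merged rectangles are pairwise distinct, one per step.
-/

namespace IsYoung

variable {r c : ℕ} {Y : Set (ℕ × ℕ)}

lemma finite (hY : IsYoung r c Y) : Y.Finite :=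
  ((Set.finite_Icc 1 r).prod (Set.finite_Icc 1 c)).subset hY.1

lemma one_le_of_mem (hY : IsYoung r c Y) {q : ℕ × ℕ} (hq : q ∈ Y) : 1 ≤ q.1 ∧ 1 ≤ q.2 :=
  ⟨(hY.1 hq).1.1, (hY.1 hq).2.1⟩

lemma mem_of_fst_le (hY : IsYoung r c Y) {a a' b : ℕ} (ha' : 1 ≤ a') (hle : a' ≤ a)
    (h : (a, b) ∈ Y) : (a', b) ∈ Y := by
  induction a, hle using Nat.le_induction with
  | base => exact h
  | succ n hn ih => exact ih (by simpa using (hY.2 _ h).1 (by simp only; omega))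

lemma mem_of_snd_le (hY : IsYoung r c Y) {a b b' : ℕ} (hb' : 1 ≤ b') (hle : b' ≤ b)
    (h : (a, b) ∈ Y) : (a, b') ∈ Y := by
  induction b, hle using Nat.le_induction with
  | base => exact h
  | succ n hn ih => exact ih (by simpa using (hY.2 _ h).2 (by simp only; omega))

lemma mem_of_le (hY : IsYoung r c Y) {p q : ℕ × ℕ} (hp : p ∈ Y) (hqp : q ≤ p)
    (hq₁ : 1 ≤ q.1) (hq₂ : 1 ≤ q.2) : q ∈ Y :=
  hY.mem_of_snd_le hq₂ hqp.2 (hY.mem_of_fst_le hq₁ hqp.1 hp)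

lemma eq_of_isStep_of_le (hY : IsYoung r c Y) {p q : ℕ × ℕ} (hp : IsStep Y p) (hq : q ∈ Y)
    (hpq : p ≤ q) : q = p := by
  obtain ⟨hp₁, hp₂⟩ := hY.one_le_of_mem hp.1
  refine Prod.ext (le_antisymm ?_ hpq.1) (le_antisymm ?_ hpq.2) <;> by_contra! hlt
  · exact hp.2.1 (hY.mem_of_le hq ⟨hlt, hpq.2⟩ (by omega) hp₂)
  · exact hp.2.2 (hY.mem_of_le hq ⟨hpq.1, hlt⟩ hp₁ (by omega))

end IsYoung

lemma isStep_of_maximal {Y : Set (ℕ × ℕ)} {p : ℕ × ℕ} (hp : Maximal (· ∈ Y) p) :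
    IsStep Y p := by
  refine ⟨hp.1, fun h => ?_, fun h => ?_⟩
  · have := (hp.2 h (Prod.mk_le_mk.2 ⟨by omega, le_rfl⟩)).1; omega
  · have := (hp.2 h (Prod.mk_le_mk.2 ⟨le_rfl, by omega⟩)).2; omega

lemma Set.Finite.exists_isStep_ge {Y : Set (ℕ × ℕ)} (hY : Y.Finite) {q : ℕ × ℕ} (hq : q ∈ Y) :
    ∃ p, IsStep Y p ∧ q ≤ p := by
  obtain ⟨p, hqp, hp⟩ := hY.exists_le_maximal hq
  exact ⟨p, isStep_of_maximal hp, hqp⟩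

lemma IsRect.exists_isStep_ge {Y R : Set (ℕ × ℕ)} (hR : IsRect Y R) (hY : Y.Finite)
    (hne : R.Nonempty) : ∃ p, IsStep Y p ∧ ∀ q ∈ R, q ≤ p := by
  obtain ⟨⟨S, T, rfl⟩, hRY⟩ := hR
  have hfin := hY.subset hRY
  obtain ⟨x, hx, hxmax⟩ := Set.exists_max_image _ Prod.fst hfin hne
  obtain ⟨y, hy, hymax⟩ := Set.exists_max_image _ Prod.snd hfin hne
  obtain ⟨p, hp, hcorner⟩ := hY.exists_isStep_ge (hRY (Set.mk_mem_prod hx.1 hy.2))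
  exact ⟨p, hp, fun q hq => le_trans (show q ≤ (x.1, y.2) from ⟨hxmax q hq, hymax q hq⟩) hcorner⟩

lemma card_filter_image_le_card_filter {α β γ : Type*} [DecidableEq β] (P : Finset α)
    (m : α → β) (C : Finset γ) (f : γ → α) (U : β → Prop) [DecidablePred U] (V : γ → Prop)
    [DecidablePred V] (h : ∀ p ∈ P, U (m p) → ∃ R ∈ C, V R ∧ f R = p) :
    ((P.image m).filter U).card ≤ (C.filter V).card := by
  calc ((P.image m).filter U).card
      = ((P.filter (U ∘ m)).image m).card := by rw [Finset.filter_image]; rfl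
    _ ≤ (P.filter (U ∘ m)).card := Finset.card_image_le
    _ ≤ ((C.filter V).image f).card := Finset.card_le_card fun p hp => by
        obtain ⟨hpP, hUp⟩ := Finset.mem_filter.1 hp
        obtain ⟨R, hR, hVR, rfl⟩ := h p hpP hUp
        exact Finset.mem_image_of_mem f (Finset.mem_filter.2 ⟨hR, hVR⟩)
    _ ≤ (C.filter V).card := Finset.card_image_le

def mergedRect {α : Type*} (C : Finset (Set (ℕ × ℕ))) (f : Set (ℕ × ℕ) → α) (p : α) :
    Set (ℕ × ℕ) :=
  {s | ∃ R ∈ C, f R = p ∧ UsesRow R s} ×ˢ {t | ∃ R ∈ C, f R = p ∧ UsesCol R t}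

section mergedRect

variable {α : Type*} {C : Finset (Set (ℕ × ℕ))} {f : Set (ℕ × ℕ) → α}

lemma subset_mergedRect {R : Set (ℕ × ℕ)} (hR : R ∈ C) : R ⊆ mergedRect C f (f R) :=
  fun q hq => ⟨⟨R, hR, rfl, q.2, hq⟩, ⟨R, hR, rfl, q.1, hq⟩⟩

lemma IsLocal.image_mergedRect {i j : ℕ} (hC : IsLocal i j C) (P : Finset α) :
    IsLocal i j (P.image (mergedRect C f)) := by
  refine ⟨fun s => le_trans ?_ (hC.1 s), fun t => le_trans ?_ (hC.2 t)⟩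
  · exact card_filter_image_le_card_filter _ _ _ f _ _
      fun _ _ ⟨_, ⟨R, hR, hRp, hsR⟩, _⟩ => ⟨R, hR, hsR, hRp⟩
  · exact card_filter_image_le_card_filter _ _ _ f _ _
      fun _ _ ⟨_, _, ⟨R, hR, hRp, htR⟩⟩ => ⟨R, hR, htR, hRp⟩

end mergedRect

def AssignsDominatingSteps (Y : Set (ℕ × ℕ)) (C : Finset (Set (ℕ × ℕ)))
    (f : Set (ℕ × ℕ) → ℕ × ℕ) : Prop :=
  ∀ R ∈ C, R.Nonempty → IsStep Y (f R) ∧ ∀ q ∈ R, q ≤ f R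

section AssignsDominatingSteps

variable {r c : ℕ} {Y : Set (ℕ × ℕ)} {C : Finset (Set (ℕ × ℕ))} {f : Set (ℕ × ℕ) → ℕ × ℕ}

lemma le_of_mem_mergedRect (hf : AssignsDominatingSteps Y C f)
    {p q : ℕ × ℕ} (hq : q ∈ mergedRect C f p) : q ≤ p := by
  obtain ⟨⟨R, hR, rfl, t, hqt⟩, ⟨R', hR', hR'p, s, hsq⟩⟩ := hq
  exact ⟨((hf R hR ⟨_, hqt⟩).2 _ hqt).1, hR'p ▸ ((hf R' hR' ⟨_, hsq⟩).2 _ hsq).2⟩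

lemma mergedRect_subset (hY : IsYoung r c Y) (hC : IsCover Y C)
    (hf : AssignsDominatingSteps Y C f) {p : ℕ × ℕ} (hp : p ∈ Y) :
    mergedRect C f p ⊆ Y := by
  intro q hq
  have hqp := le_of_mem_mergedRect hf hq
  obtain ⟨⟨R, hR, -, t, hqt⟩, ⟨R', hR', -, s, hsq⟩⟩ := hq
  exact hY.mem_of_le hp hqp
    (hY.one_le_of_mem ((hC.1 R hR).2 hqt)).1 (hY.one_le_of_mem ((hC.1 R' hR').2 hsq)).2

lemma self_mem_mergedRect (hY : IsYoung r c Y) (hC : IsCover Y C)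
    (hf : AssignsDominatingSteps Y C f) {p : ℕ × ℕ}
    (hp : IsStep Y p) : p ∈ mergedRect C f p := by
  obtain ⟨R, hR, hpR⟩ := Set.mem_iUnion₂.1 (hC.2.symm ▸ hp.1 : p ∈ ⋃ R ∈ C, R)
  obtain ⟨hfR, hRf⟩ := hf R hR ⟨p, hpR⟩
  have hfRp : f R = p := hY.eq_of_isStep_of_le hp hfR.1 (hRf p hpR)
  simpa only [hfRp] using subset_mergedRect (f := f) hR hpR

lemma injOn_mergedRect (hY : IsYoung r c Y) (hC : IsCover Y C)
    (hf : AssignsDominatingSteps Y C f) :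
    Set.InjOn (mergedRect C f) (steps Y) := fun _ hp _ hq hpq =>
  le_antisymm (le_of_mem_mergedRect hf (hpq ▸ self_mem_mergedRect hY hC hf hp))
    (le_of_mem_mergedRect hf (hpq ▸ self_mem_mergedRect hY hC hf hq))

lemma IsCover.image_mergedRect (hY : IsYoung r c Y) (hC : IsCover Y C)
    (hf : AssignsDominatingSteps Y C f) {P : Finset (ℕ × ℕ)}
    (hP : ↑P = steps Y) : IsCover Y (P.image (mergedRect C f)) := by
  have hPY : ∀ p ∈ P, mergedRect C f p ⊆ Y := fun p hp =>
    mergedRect_subset hY hC hf (hP ▸ Finset.mem_coe.2 hp : p ∈ steps Y).1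
  refine ⟨Finset.forall_mem_image.2 fun p hp => ⟨⟨_, _, rfl⟩, hPY p hp⟩,
    Set.Subset.antisymm (Set.iUnion₂_subset (Finset.forall_mem_image.2 hPY)) fun q hq => ?_⟩
  obtain ⟨R, hR, hqR⟩ := Set.mem_iUnion₂.1 (hC.2.symm ▸ hq : q ∈ ⋃ R ∈ C, R)
  have hfRP : f R ∈ P := by
    rw [← Finset.mem_coe, hP]; exact (hf R hR ⟨q, hqR⟩).1
  exact Set.mem_iUnion₂.2 ⟨_, Finset.mem_image_of_mem _ hfRP, subset_mergedRect hR hqR⟩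

end AssignsDominatingSteps

theorem exists_cover_with_exactly_z_rectangles (i j z r c : ℕ) (Y : Set (ℕ × ℕ))
    (hY : IsYoung r c Y) (hz : (steps Y).ncard = z)
    (C : Finset (Set (ℕ × ℕ))) (hC : IsLocalCover i j Y C) :
    ∃ C' : Finset (Set (ℕ × ℕ)), IsLocalCover i j Y C' ∧ C'.card = z := by
  obtain ⟨hcover, hlocal⟩ := hC
  choose! f hf using fun R hR (hne : R.Nonempty) =>
    (hcover.1 R hR).exists_isStep_ge hY.finite hne
  have hsteps : (steps Y).Finite := hY.finite.subset fun _ hp => hp.1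
  refine ⟨hsteps.toFinset.image (mergedRect C f),
    ⟨hcover.image_mergedRect hY hf hsteps.coe_toFinset, hlocal.image_mergedRect _⟩, ?_⟩
  rw [Finset.card_image_of_injOn (hsteps.coe_toFinset.symm ▸ injOn_mergedRect hY hcover hf),
    ← hz, Set.ncard_eq_toFinset_card _ hsteps]
end

section
/- In any cover C of a Young diagram Y by generalized rectangles, each step (s,t) of Y is contained in some rectangle R ∈ C with R ⊆ [s]×[t]; consequently, if |C| is less than the number of steps of Y, then C is not a cover, i.e., every cover of Y has at least as many rectangles as Y has steps. -/
open scoped Classical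

theorem step_in_rectangle_and_cover_lower_bound (r c : ℕ) (Y : Set (ℕ × ℕ))
    (hY : IsYoung r c Y) (C : Finset (Set (ℕ × ℕ))) (hC : IsCover Y C) :
    (∀ p : ℕ × ℕ, IsStep Y p →
      ∃ R ∈ C, p ∈ R ∧ R ⊆ Set.Icc 1 p.1 ×ˢ Set.Icc 1 p.2) ∧
    (steps Y).ncard ≤ C.card := by
  obtain ⟨hbox, hdown⟩ := hY
  obtain ⟨hrect, hunion⟩ := hC
  have desc1 : ∀ k s t, 1 ≤ s → (s + k, t) ∈ Y → (s, t) ∈ Y := by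
    intro k
    induction k with
    | zero => intro s t _ h; simpa using h
    | succ k ih =>
      intro s t hs h
      apply ih s t hs
      have h2 : (2 : ℕ) ≤ (((s + (k+1), t) : ℕ × ℕ)).1 := by simp; omega
      have hd := (hdown _ h).1 h2
      have he : ((s + (k+1), t) : ℕ × ℕ).1 - 1 = s + k := by simp
      rw [he] at hd
      exact hd
  have desc2 : ∀ k s t, 1 ≤ t → (s, t + k) ∈ Y → (s, t) ∈ Y := by
    intro k
    induction k with
    | zero => intro s t _ h; simpa using h
    | succ k ih =>
      intro s t ht h
      apply ih s t ht
      have h2 : (2 : ℕ) ≤ (((s, t + (k+1)) : ℕ × ℕ)).2 := by simp; omega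
      have hd := (hdown _ h).2 h2
      have he : ((s, t + (k+1)) : ℕ × ℕ).2 - 1 = t + k := by simp
      rw [he] at hd
      exact hd
  have key : ∀ p : ℕ × ℕ, IsStep Y p →
      ∃ R ∈ C, p ∈ R ∧ R ⊆ Set.Icc 1 p.1 ×ˢ Set.Icc 1 p.2 := by
    rintro ⟨s, t⟩ ⟨hpY, hstep1, hstep2⟩
    have hmem : (s, t) ∈ ⋃ R ∈ C, R := hunion ▸ hpY
    simp only [Set.mem_iUnion] at hmem
    obtain ⟨R, hRC, hpR⟩ := hmem
    refine ⟨R, hRC, hpR, ?_⟩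
    obtain ⟨⟨S, T, rfl⟩, hRY⟩ := hrect R hRC
    obtain ⟨hsS, htT⟩ := hpR
    rintro ⟨a, b⟩ ⟨haS, hbT⟩
    have hat : (a, t) ∈ Y := hRY ⟨haS, htT⟩
    have hsb : (s, b) ∈ Y := hRY ⟨hsS, hbT⟩
    have ha1 : 1 ≤ a := (hbox hat).1.1
    have hb1 : 1 ≤ b := (hbox hsb).2.1
    have has : a ≤ s := by
      by_contra h
      push_neg at h
      have ha' : ((s+1) + (a - (s+1)), t) ∈ Y := by
        have he : (s+1) + (a - (s+1)) = a := by omega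
        rw [he]; exact hat
      exact hstep1 (desc1 _ _ _ (by omega) ha')
    have hbt : b ≤ t := by
      by_contra h
      push_neg at h
      have hb' : (s, (t+1) + (b - (t+1))) ∈ Y := by
        have he : (t+1) + (b - (t+1)) = b := by omega
        rw [he]; exact hsb
      exact hstep2 (desc2 _ _ _ (by omega) hb')
    exact ⟨⟨ha1, has⟩, hb1, hbt⟩
  refine ⟨key, ?_⟩
  choose! f hfC hfmem hfsub using key
  have hinj : Set.InjOn f (steps Y) := by
    intro p hp q hq hfe
    have h1 : q ∈ Set.Icc 1 p.1 ×ˢ Set.Icc 1 p.2 := hfsub p hp (hfe ▸ hfmem q hq)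
    have h2 : p ∈ Set.Icc 1 q.1 ×ˢ Set.Icc 1 q.2 := hfsub q hq (hfe ▸ hfmem p hp)
    obtain ⟨⟨_, hq1⟩, _, hq2⟩ := h1
    obtain ⟨⟨_, hp1⟩, _, hp2⟩ := h2
    exact Prod.ext (le_antisymm hp1 hq1) (le_antisymm hp2 hq2)
  have himg : f '' (steps Y) ⊆ ↑C := by rintro _ ⟨p, hp, rfl⟩; exact hfC p hp
  calc (steps Y).ncard = (f '' steps Y).ncard := (Set.ncard_image_of_injOn hinj).symm
    _ ≤ (↑C : Set (Set (ℕ × ℕ))).ncard := Set.ncard_le_ncard himg C.finite_toSet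
    _ = C.card := Set.ncard_coe_finset C
end

section
/- For every i, j ≥ 1, the staircase Young diagram Y_z with z = C(i+j, i) − 1 steps admits a partition into z pairwise disjoint actual rectangles such that each row is used by at most i rectangles and each column by at most j rectangles. -/
open scoped Classical

namespace SP

/-- column shift -/
def shC (c : ℕ) (R : Set (ℕ × ℕ)) : Set (ℕ × ℕ) := {p | c ≤ p.2 ∧ (p.1, p.2 - c) ∈ R}
/-- row shift -/
def shR (a : ℕ) (R : Set (ℕ × ℕ)) : Set (ℕ × ℕ) := {p | a ≤ p.1 ∧ (p.1 - a, p.2) ∈ R}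

lemma shC_inj (c : ℕ) : Function.Injective (shC c) := by
  intro R R' h
  ext ⟨s, t⟩
  have := Set.ext_iff.mp h (s, t + c)
  simpa [shC] using this

lemma shR_inj (a : ℕ) : Function.Injective (shR a) := by
  intro R R' h
  ext ⟨s, t⟩
  have := Set.ext_iff.mp h (s + a, t)
  simpa [shR] using this

lemma shC_mono {c : ℕ} {R S : Set (ℕ × ℕ)} (h : R ⊆ S) : shC c R ⊆ shC c S :=
  fun _ hp => ⟨hp.1, h hp.2⟩

lemma shR_mono {a : ℕ} {R S : Set (ℕ × ℕ)} (h : R ⊆ S) : shR a R ⊆ shR a S :=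
  fun _ hp => ⟨hp.1, h hp.2⟩

lemma shC_ne {c : ℕ} {R : Set (ℕ × ℕ)} (h : R.Nonempty) : (shC c R).Nonempty := by
  obtain ⟨⟨s, t⟩, h⟩ := h
  exact ⟨(s, t + c), by simp [shC, h]⟩

lemma shR_ne {a : ℕ} {R : Set (ℕ × ℕ)} (h : R.Nonempty) : (shR a R).Nonempty := by
  obtain ⟨⟨s, t⟩, h⟩ := h
  exact ⟨(s + a, t), by simp [shR, h]⟩

lemma shC_disj {c : ℕ} {R R' : Set (ℕ × ℕ)} (h : Disjoint R R') :
    Disjoint (shC c R) (shC c R') := by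
  rw [Set.disjoint_left] at h ⊢
  intro p hp hp'
  exact h hp.2 hp'.2

lemma shR_disj {a : ℕ} {R R' : Set (ℕ × ℕ)} (h : Disjoint R R') :
    Disjoint (shR a R) (shR a R') := by
  rw [Set.disjoint_left] at h ⊢
  intro p hp hp'
  exact h hp.2 hp'.2

lemma shC_Icc (c a b u v : ℕ) :
    shC c (Set.Icc a b ×ˢ Set.Icc u v) = Set.Icc a b ×ˢ Set.Icc (u + c) (v + c) := by
  ext ⟨s, t⟩
  simp only [shC, Set.mem_setOf_eq, Set.mem_prod, Set.mem_Icc]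
  omega

lemma shR_Icc (a u v b c : ℕ) :
    shR a (Set.Icc u v ×ˢ Set.Icc b c) = Set.Icc (u + a) (v + a) ×ˢ Set.Icc b c := by
  ext ⟨s, t⟩
  simp only [shR, Set.mem_setOf_eq, Set.mem_prod, Set.mem_Icc]
  omega

lemma usesRow_shC {c : ℕ} {R : Set (ℕ × ℕ)} {s : ℕ} : UsesRow (shC c R) s ↔ UsesRow R s := by
  constructor
  · rintro ⟨t, ht⟩; exact ⟨t - c, ht.2⟩
  · rintro ⟨t, ht⟩; exact ⟨t + c, by simp [shC, ht]⟩

lemma usesCol_shR {a : ℕ} {R : Set (ℕ × ℕ)} {t : ℕ} : UsesCol (shR a R) t ↔ UsesCol R t := by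
  constructor
  · rintro ⟨s, hs⟩; exact ⟨s - a, hs.2⟩
  · rintro ⟨s, hs⟩; exact ⟨s + a, by simp [shR, hs]⟩

lemma usesRow_shR {a : ℕ} {R : Set (ℕ × ℕ)} {s : ℕ} :
    UsesRow (shR a R) s ↔ a ≤ s ∧ UsesRow R (s - a) := by
  constructor
  · rintro ⟨t, ht⟩; exact ⟨ht.1, t, ht.2⟩
  · rintro ⟨h1, t, ht⟩; exact ⟨t, h1, ht⟩

lemma usesCol_shC {c : ℕ} {R : Set (ℕ × ℕ)} {t : ℕ} :
    UsesCol (shC c R) t ↔ c ≤ t ∧ UsesCol R (t - c) := by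
  constructor
  · rintro ⟨s, hs⟩; exact ⟨hs.1, s, hs.2⟩
  · rintro ⟨h1, s, hs⟩; exact ⟨s, h1, hs⟩

lemma mem_shC_Yd {A c : ℕ} {p : ℕ × ℕ} (h : p ∈ shC c (Yd A)) :
    c + 1 ≤ p.2 ∧ 1 ≤ p.1 ∧ p.1 ≤ A ∧ p.2 ≤ A + c := by
  obtain ⟨h1, h2⟩ := h
  simp only [Yd, Set.mem_setOf_eq, Set.mem_Icc] at h2
  omega

lemma mem_shR_Yd {B a : ℕ} {p : ℕ × ℕ} (h : p ∈ shR a (Yd B)) :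
    a + 1 ≤ p.1 ∧ 1 ≤ p.2 ∧ p.2 ≤ B ∧ p.1 ≤ B + a := by
  obtain ⟨h1, h2⟩ := h
  simp only [Yd, Set.mem_setOf_eq, Set.mem_Icc] at h2
  omega

lemma Yd_decomp (A B : ℕ) :
    Yd (A + B + 1) =
      (Set.Icc 1 (A + 1) ×ˢ Set.Icc 1 (B + 1)) ∪ shC (B + 1) (Yd A) ∪ shR (A + 1) (Yd B) := by
  ext ⟨s, t⟩
  simp only [Yd, shC, shR, Set.mem_setOf_eq, Set.mem_union, Set.mem_prod, Set.mem_Icc]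
  omega

/-- The full inductive statement. -/
def Good (i j z : ℕ) (C : Finset (Set (ℕ × ℕ))) : Prop :=
  C.card = z ∧ (∀ R ∈ C, IsActualRect (Yd z) R) ∧ (∀ R ∈ C, R.Nonempty) ∧
  (∀ R ∈ C, ∀ R' ∈ C, R ≠ R' → Disjoint R R') ∧ (⋃ R ∈ C, R) = Yd z ∧ IsLocal i j C

lemma base_rows (j : ℕ) (hj : 1 ≤ j) : ∃ C, Good 1 j j C := by
  set z := j with hzdef
  set g : ℕ → Set (ℕ × ℕ) := fun s => Set.Icc s s ×ˢ Set.Icc 1 (z + 1 - s) with hg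
  have hmem : ∀ s, 1 ≤ s → s ≤ z → (s, 1) ∈ g s := by
    intro s h1 h2
    simp only [hg, Set.mem_prod, Set.mem_Icc]
    omega
  refine ⟨(Finset.Icc 1 z).image g, ?_, ?_, ?_, ?_, ?_, ?_, ?_⟩
  · rw [Finset.card_image_of_injOn, Nat.card_Icc]
    · omega
    · intro s hs s' hs' h
      simp only [Finset.coe_Icc, Set.mem_Icc] at hs hs'
      have h1 := hmem s hs.1 hs.2
      rw [h] at h1
      simp only [hg, Set.mem_prod, Set.mem_Icc] at h1
      omega
  · intro R hR
    simp only [Finset.mem_image, Finset.mem_Icc] at hR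
    obtain ⟨s, hs, rfl⟩ := hR
    refine ⟨⟨s, s, 1, z + 1 - s, rfl⟩, ?_⟩
    rintro ⟨x, y⟩ hx
    simp only [hg, Set.mem_prod, Set.mem_Icc] at hx
    simp only [Yd, Set.mem_setOf_eq, Set.mem_Icc]
    omega
  · intro R hR
    simp only [Finset.mem_image, Finset.mem_Icc] at hR
    obtain ⟨s, hs, rfl⟩ := hR
    exact ⟨(s, 1), hmem s hs.1 hs.2⟩
  · intro R hR R' hR' hne
    simp only [Finset.mem_image, Finset.mem_Icc] at hR hR'
    obtain ⟨s, hs, rfl⟩ := hR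
    obtain ⟨s', hs', rfl⟩ := hR'
    rw [Set.disjoint_left]
    rintro ⟨x, y⟩ hx hx'
    simp only [hg, Set.mem_prod, Set.mem_Icc] at hx hx'
    exact hne (congrArg g (by omega))
  · ext ⟨x, y⟩
    simp only [Set.mem_iUnion, Finset.mem_image, Finset.mem_Icc, exists_prop, Yd,
      Set.mem_setOf_eq, Set.mem_Icc]
    constructor
    · rintro ⟨R, ⟨s, hs, rfl⟩, hx⟩
      simp only [hg, Set.mem_prod, Set.mem_Icc] at hx
      omega
    · rintro ⟨h1, h2, h3⟩
      refine ⟨g x, ⟨x, ⟨h1.1, h1.2⟩, rfl⟩, ?_⟩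
      simp only [hg, Set.mem_prod, Set.mem_Icc]
      omega
  · intro s
    rw [Finset.card_le_one]
    intro R hR R' hR'
    simp only [Finset.mem_filter, Finset.mem_image, Finset.mem_Icc] at hR hR'
    obtain ⟨⟨a, ha, rfl⟩, t, ht⟩ := hR
    obtain ⟨⟨a', ha', rfl⟩, t', ht'⟩ := hR'
    simp only [hg, Set.mem_prod, Set.mem_Icc] at ht ht'
    have : a = a' := by omega
    rw [this]
  · intro t
    calc (Finset.filter _ _).card ≤ ((Finset.Icc 1 z).image g).card := Finset.card_filter_le _ _
      _ ≤ (Finset.Icc 1 z).card := Finset.card_image_le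
      _ = z := by rw [Nat.card_Icc]; omega

lemma base_cols (i : ℕ) (hi : 1 ≤ i) : ∃ C, Good i 1 i C := by
  set z := i with hzdef
  set g : ℕ → Set (ℕ × ℕ) := fun t => Set.Icc 1 (z + 1 - t) ×ˢ Set.Icc t t with hg
  have hmem : ∀ t, 1 ≤ t → t ≤ z → (1, t) ∈ g t := by
    intro t h1 h2
    simp only [hg, Set.mem_prod, Set.mem_Icc]
    omega
  refine ⟨(Finset.Icc 1 z).image g, ?_, ?_, ?_, ?_, ?_, ?_, ?_⟩
  · rw [Finset.card_image_of_injOn, Nat.card_Icc]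
    · omega
    · intro t ht t' ht' h
      simp only [Finset.coe_Icc, Set.mem_Icc] at ht ht'
      have h1 := hmem t ht.1 ht.2
      rw [h] at h1
      simp only [hg, Set.mem_prod, Set.mem_Icc] at h1
      omega
  · intro R hR
    simp only [Finset.mem_image, Finset.mem_Icc] at hR
    obtain ⟨t, ht, rfl⟩ := hR
    refine ⟨⟨1, z + 1 - t, t, t, rfl⟩, ?_⟩
    rintro ⟨x, y⟩ hx
    simp only [hg, Set.mem_prod, Set.mem_Icc] at hx
    simp only [Yd, Set.mem_setOf_eq, Set.mem_Icc]
    omega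
  · intro R hR
    simp only [Finset.mem_image, Finset.mem_Icc] at hR
    obtain ⟨t, ht, rfl⟩ := hR
    exact ⟨(1, t), hmem t ht.1 ht.2⟩
  · intro R hR R' hR' hne
    simp only [Finset.mem_image, Finset.mem_Icc] at hR hR'
    obtain ⟨t, ht, rfl⟩ := hR
    obtain ⟨t', ht', rfl⟩ := hR'
    rw [Set.disjoint_left]
    rintro ⟨x, y⟩ hx hx'
    simp only [hg, Set.mem_prod, Set.mem_Icc] at hx hx'
    exact hne (congrArg g (by omega))
  · ext ⟨x, y⟩
    simp only [Set.mem_iUnion, Finset.mem_image, Finset.mem_Icc, exists_prop, Yd,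
      Set.mem_setOf_eq, Set.mem_Icc]
    constructor
    · rintro ⟨R, ⟨t, ht, rfl⟩, hx⟩
      simp only [hg, Set.mem_prod, Set.mem_Icc] at hx
      omega
    · rintro ⟨h1, h2, h3⟩
      refine ⟨g y, ⟨y, ⟨h2.1, h2.2⟩, rfl⟩, ?_⟩
      simp only [hg, Set.mem_prod, Set.mem_Icc]
      omega
  · intro s
    calc (Finset.filter _ _).card ≤ ((Finset.Icc 1 z).image g).card := Finset.card_filter_le _ _
      _ ≤ (Finset.Icc 1 z).card := Finset.card_image_le
      _ = z := by rw [Nat.card_Icc]; omega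
  · intro t
    rw [Finset.card_le_one]
    intro R hR R' hR'
    simp only [Finset.mem_filter, Finset.mem_image, Finset.mem_Icc] at hR hR'
    obtain ⟨⟨a, ha, rfl⟩, s, hs⟩ := hR
    obtain ⟨⟨a', ha', rfl⟩, s', hs'⟩ := hR'
    simp only [hg, Set.mem_prod, Set.mem_Icc] at hs hs'
    have : a = a' := by omega
    rw [this]

lemma glue {i j A B : ℕ} {CA CB : Finset (Set (ℕ × ℕ))}
    (hCA : Good i (j + 1) A CA) (hCB : Good (i + 1) j B CB) :
    ∃ C, Good (i + 1) (j + 1) (A + B + 1) C := by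
  obtain ⟨cardA, rectA, neA, djA, unA, locA⟩ := hCA
  obtain ⟨cardB, rectB, neB, djB, unB, locB⟩ := hCB
  have subA : ∀ R ∈ CA, R ⊆ Yd A := by
    intro R hR
    intro p hp
    rw [← unA]
    exact Set.mem_iUnion₂.mpr ⟨R, hR, hp⟩
  have subB : ∀ R ∈ CB, R ⊆ Yd B := by
    intro R hR
    intro p hp
    rw [← unB]
    exact Set.mem_iUnion₂.mpr ⟨R, hR, hp⟩
  set R0 : Set (ℕ × ℕ) := Set.Icc 1 (A + 1) ×ˢ Set.Icc 1 (B + 1) with hR0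
  set U1 : Finset (Set (ℕ × ℕ)) := CA.image (shC (B + 1)) with hU1
  set U2 : Finset (Set (ℕ × ℕ)) := CB.image (shR (A + 1)) with hU2
  have hsub1 : ∀ R ∈ U1, R ⊆ shC (B + 1) (Yd A) := by
    intro R hR
    simp only [hU1, Finset.mem_image] at hR
    obtain ⟨R', hR', rfl⟩ := hR
    exact shC_mono (subA R' hR')
  have hsub2 : ∀ R ∈ U2, R ⊆ shR (A + 1) (Yd B) := by
    intro R hR
    simp only [hU2, Finset.mem_image] at hR
    obtain ⟨R', hR', rfl⟩ := hR
    exact shR_mono (subB R' hR')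
  have hne1 : ∀ R ∈ U1, R.Nonempty := by
    intro R hR
    simp only [hU1, Finset.mem_image] at hR
    obtain ⟨R', hR', rfl⟩ := hR
    exact shC_ne (neA R' hR')
  have hne2 : ∀ R ∈ U2, R.Nonempty := by
    intro R hR
    simp only [hU2, Finset.mem_image] at hR
    obtain ⟨R', hR', rfl⟩ := hR
    exact shR_ne (neB R' hR')
  have hR0mem : ((1, 1) : ℕ × ℕ) ∈ R0 := by
    simp only [hR0, Set.mem_prod, Set.mem_Icc]; omega
  have hR0notin : R0 ∉ U1 ∪ U2 := by
    intro h
    rcases Finset.mem_union.mp h with h | h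
    · have := mem_shC_Yd (hsub1 _ h hR0mem)
      omega
    · have := mem_shR_Yd (hsub2 _ h hR0mem)
      omega
  have hU1U2 : Disjoint U1 U2 := by
    rw [Finset.disjoint_left]
    intro X h1 h2
    obtain ⟨p, hp⟩ := hne1 X h1
    have q1 := mem_shC_Yd (hsub1 X h1 hp)
    have q2 := mem_shR_Yd (hsub2 X h2 hp)
    omega
  have cardU1f : ∀ p : Set (ℕ × ℕ) → Prop,
      (U1.filter p).card = (CA.filter (fun R => p (shC (B + 1) R))).card := by
    intro p
    rw [hU1, Finset.filter_image, Finset.card_image_of_injective _ (shC_inj _)]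
  have cardU2f : ∀ p : Set (ℕ × ℕ) → Prop,
      (U2.filter p).card = (CB.filter (fun R => p (shR (A + 1) R))).card := by
    intro p
    rw [hU2, Finset.filter_image, Finset.card_image_of_injective _ (shR_inj _)]
  have filtsplit : ∀ p : Set (ℕ × ℕ) → Prop,
      ((insert R0 (U1 ∪ U2)).filter p).card ≤
        (({R0} : Finset (Set (ℕ × ℕ))).filter p).card + (U1.filter p).card +
          (U2.filter p).card := by
    intro p
    rw [Finset.insert_eq, Finset.filter_union, Finset.filter_union]
    refine le_trans (Finset.card_union_le _ _) ?_
    have := Finset.card_union_le (U1.filter p) (U2.filter p)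
    omega
  refine ⟨insert R0 (U1 ∪ U2), ?_, ?_, ?_, ?_, ?_, ?_, ?_⟩
  · rw [Finset.card_insert_of_notMem hR0notin, Finset.card_union_of_disjoint hU1U2,
      hU1, hU2, Finset.card_image_of_injective _ (shC_inj _),
      Finset.card_image_of_injective _ (shR_inj _), cardA, cardB]
  · intro R hR
    rcases Finset.mem_insert.mp hR with rfl | hR
    · refine ⟨⟨1, A + 1, 1, B + 1, rfl⟩, ?_⟩
      rw [Yd_decomp A B]
      exact fun p hp => Set.mem_union_left _ (Set.mem_union_left _ hp)
    · rcases Finset.mem_union.mp hR with hR | hR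
      · refine ⟨?_, ?_⟩
        · simp only [hU1, Finset.mem_image] at hR
          obtain ⟨R', hR', rfl⟩ := hR
          obtain ⟨⟨a, b, u, v, rfl⟩, -⟩ := rectA R' hR'
          exact ⟨a, b, u + (B + 1), v + (B + 1), shC_Icc _ _ _ _ _⟩
        · refine (hsub1 R hR).trans ?_
          rw [Yd_decomp A B]
          exact fun p hp => Set.mem_union_left _ (Set.mem_union_right _ hp)
      · refine ⟨?_, ?_⟩
        · simp only [hU2, Finset.mem_image] at hR
          obtain ⟨R', hR', rfl⟩ := hR
          obtain ⟨⟨a, b, u, v, rfl⟩, -⟩ := rectB R' hR'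
          exact ⟨a + (A + 1), b + (A + 1), u, v, shR_Icc _ _ _ _ _⟩
        · refine (hsub2 R hR).trans ?_
          rw [Yd_decomp A B]
          exact fun p hp => Set.mem_union_right _ hp
  · intro R hR
    rcases Finset.mem_insert.mp hR with rfl | hR
    · exact ⟨(1, 1), hR0mem⟩
    · rcases Finset.mem_union.mp hR with hR | hR
      · exact hne1 R hR
      · exact hne2 R hR
  · have d01 : ∀ R ∈ U1, Disjoint R0 R := by
      intro R hR
      rw [Set.disjoint_left]
      intro p hp hp'
      have q := mem_shC_Yd (hsub1 R hR hp')
      simp only [hR0, Set.mem_prod, Set.mem_Icc] at hp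
      omega
    have d02 : ∀ R ∈ U2, Disjoint R0 R := by
      intro R hR
      rw [Set.disjoint_left]
      intro p hp hp'
      have q := mem_shR_Yd (hsub2 R hR hp')
      simp only [hR0, Set.mem_prod, Set.mem_Icc] at hp
      omega
    have d12 : ∀ R ∈ U1, ∀ R' ∈ U2, Disjoint R R' := by
      intro R hR R' hR'
      rw [Set.disjoint_left]
      intro p hp hp'
      have q1 := mem_shC_Yd (hsub1 R hR hp)
      have q2 := mem_shR_Yd (hsub2 R' hR' hp')
      omega
    intro R hR R' hR' hne
    rcases Finset.mem_insert.mp hR with rfl | hR <;>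
      rcases Finset.mem_insert.mp hR' with h' | hR'
    · exact absurd h'.symm hne
    · rcases Finset.mem_union.mp hR' with h | h
      · exact d01 R' h
      · exact d02 R' h
    · subst h'
      rcases Finset.mem_union.mp hR with h | h
      · exact (d01 R h).symm
      · exact (d02 R h).symm
    · rcases Finset.mem_union.mp hR with h | h <;>
        rcases Finset.mem_union.mp hR' with h' | h'
      · simp only [hU1, Finset.mem_image] at h h'
        obtain ⟨S, hS, rfl⟩ := h
        obtain ⟨S', hS', rfl⟩ := h'
        exact shC_disj (djA S hS S' hS' (fun hEq => hne (by rw [hEq])))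
      · exact d12 R h R' h'
      · exact (d12 R' h' R h).symm
      · simp only [hU2, Finset.mem_image] at h h'
        obtain ⟨S, hS, rfl⟩ := h
        obtain ⟨S', hS', rfl⟩ := h'
        exact shR_disj (djB S hS S' hS' (fun hEq => hne (by rw [hEq])))
  · rw [Finset.set_biUnion_insert, Finset.set_biUnion_union, Yd_decomp A B]
    have e1 : (⋃ R ∈ U1, R) = shC (B + 1) (Yd A) := by
      rw [← unA]
      ext p
      simp only [Set.mem_iUnion, exists_prop, hU1, Finset.mem_image, shC, Set.mem_setOf_eq]
      constructor
      · rintro ⟨X, ⟨S, hS, rfl⟩, h1, h2⟩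
        exact ⟨h1, S, hS, h2⟩
      · rintro ⟨h1, S, hS, h2⟩
        exact ⟨shC (B + 1) S, ⟨S, hS, rfl⟩, h1, h2⟩
    have e2 : (⋃ R ∈ U2, R) = shR (A + 1) (Yd B) := by
      rw [← unB]
      ext p
      simp only [Set.mem_iUnion, exists_prop, hU2, Finset.mem_image, shR, Set.mem_setOf_eq]
      constructor
      · rintro ⟨X, ⟨S, hS, rfl⟩, h1, h2⟩
        exact ⟨h1, S, hS, h2⟩
      · rintro ⟨h1, S, hS, h2⟩
        exact ⟨shR (A + 1) S, ⟨S, hS, rfl⟩, h1, h2⟩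
    rw [e1, e2, ← Set.union_assoc]
  · intro s
    refine le_trans (filtsplit _) ?_
    by_cases hs : s ≤ A + 1
    · have h2 : (U2.filter (fun R => UsesRow R s)).card = 0 := by
        rw [Finset.card_eq_zero, Finset.filter_eq_empty_iff]
        rintro R hR ⟨t, ht⟩
        have := mem_shR_Yd (hsub2 R hR ht)
        simp only at this
        omega
      have h1 : (U1.filter (fun R => UsesRow R s)).card ≤ i := by
        rw [cardU1f]
        refine le_trans (Finset.card_le_card ?_) (locA.1 s)
        intro R hR
        simp only [Finset.mem_filter] at hR ⊢
        exact ⟨hR.1, usesRow_shC.mp hR.2⟩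
      have h0 : (({R0} : Finset (Set (ℕ × ℕ))).filter (fun R => UsesRow R s)).card ≤ 1 :=
        le_trans (Finset.card_filter_le _ _) (by simp)
      omega
    · have h0 : (({R0} : Finset (Set (ℕ × ℕ))).filter (fun R => UsesRow R s)).card = 0 := by
        rw [Finset.card_eq_zero, Finset.filter_eq_empty_iff]
        rintro R hR ⟨t, ht⟩
        rw [Finset.mem_singleton] at hR
        subst hR
        simp only [hR0, Set.mem_prod, Set.mem_Icc] at ht
        omega
      have h1 : (U1.filter (fun R => UsesRow R s)).card = 0 := by
        rw [Finset.card_eq_zero, Finset.filter_eq_empty_iff]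
        rintro R hR ⟨t, ht⟩
        have := mem_shC_Yd (hsub1 R hR ht)
        simp only at this
        omega
      have h2 : (U2.filter (fun R => UsesRow R s)).card ≤ i + 1 := by
        rw [cardU2f]
        refine le_trans (Finset.card_le_card ?_) (locB.1 (s - (A + 1)))
        intro R hR
        simp only [Finset.mem_filter] at hR ⊢
        exact ⟨hR.1, (usesRow_shR.mp hR.2).2⟩
      omega
  · intro t
    refine le_trans (filtsplit _) ?_
    by_cases ht : t ≤ B + 1
    · have h1 : (U1.filter (fun R => UsesCol R t)).card = 0 := by
        rw [Finset.card_eq_zero, Finset.filter_eq_empty_iff]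
        rintro R hR ⟨s, hs⟩
        have := mem_shC_Yd (hsub1 R hR hs)
        simp only at this
        omega
      have h2 : (U2.filter (fun R => UsesCol R t)).card ≤ j := by
        rw [cardU2f]
        refine le_trans (Finset.card_le_card ?_) (locB.2 t)
        intro R hR
        simp only [Finset.mem_filter] at hR ⊢
        exact ⟨hR.1, usesCol_shR.mp hR.2⟩
      have h0 : (({R0} : Finset (Set (ℕ × ℕ))).filter (fun R => UsesCol R t)).card ≤ 1 :=
        le_trans (Finset.card_filter_le _ _) (by simp)
      omega
    · have h0 : (({R0} : Finset (Set (ℕ × ℕ))).filter (fun R => UsesCol R t)).card = 0 := by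
        rw [Finset.card_eq_zero, Finset.filter_eq_empty_iff]
        rintro R hR ⟨s, hs⟩
        rw [Finset.mem_singleton] at hR
        subst hR
        simp only [hR0, Set.mem_prod, Set.mem_Icc] at hs
        omega
      have h2 : (U2.filter (fun R => UsesCol R t)).card = 0 := by
        rw [Finset.card_eq_zero, Finset.filter_eq_empty_iff]
        rintro R hR ⟨s, hs⟩
        have := mem_shR_Yd (hsub2 R hR hs)
        simp only at this
        omega
      have h1 : (U1.filter (fun R => UsesCol R t)).card ≤ j + 1 := by
        rw [cardU1f]
        refine le_trans (Finset.card_le_card ?_) (locA.2 (t - (B + 1)))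
        intro R hR
        simp only [Finset.mem_filter] at hR ⊢
        exact ⟨hR.1, (usesCol_shC.mp hR.2).2⟩
      omega

lemma main : ∀ n i j : ℕ, 1 ≤ i → 1 ≤ j → i + j ≤ n →
    ∃ C, Good i j ((i + j).choose i - 1) C := by
  intro n
  induction n with
  | zero => intro i j hi hj h; omega
  | succ n ih =>
    intro i j hi hj h
    obtain rfl | hi2 : i = 1 ∨ 2 ≤ i := by omega
    · have hz : (1 + j).choose 1 - 1 = j := by rw [Nat.choose_one_right]; omega
      rw [hz]
      exact base_rows j hj
    obtain rfl | hj2 : j = 1 ∨ 2 ≤ j := by omega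
    · have hz : (i + 1).choose i - 1 = i := by rw [Nat.choose_succ_self_right]; omega
      rw [hz]
      exact base_cols i hi
    obtain ⟨i', rfl⟩ : ∃ i', i = i' + 1 := ⟨i - 1, by omega⟩
    obtain ⟨j', rfl⟩ : ∃ j', j = j' + 1 := ⟨j - 1, by omega⟩
    obtain ⟨CA, hCA⟩ := ih i' (j' + 1) (by omega) (by omega) (by omega)
    obtain ⟨CB, hCB⟩ := ih (i' + 1) j' (by omega) (by omega) (by omega)
    obtain ⟨C, hC⟩ := glue hCA hCB
    refine ⟨C, ?_⟩
    have h1 : 0 < (i' + (j' + 1)).choose i' := Nat.choose_pos (by omega)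
    have h2 : 0 < (i' + 1 + j').choose (i' + 1) := Nat.choose_pos (by omega)
    have hp : (i' + 1 + (j' + 1)).choose (i' + 1) =
        (i' + (j' + 1)).choose i' + (i' + 1 + j').choose (i' + 1) := by
      have e1 : i' + 1 + (j' + 1) = (i' + j' + 1) + 1 := by omega
      have e2 : i' + (j' + 1) = i' + j' + 1 := by omega
      have e3 : i' + 1 + j' = i' + j' + 1 := by omega
      rw [e1, e2, e3, Nat.choose_succ_succ']
    have hz : (i' + 1 + (j' + 1)).choose (i' + 1) - 1 =
        ((i' + (j' + 1)).choose i' - 1) + ((i' + 1 + j').choose (i' + 1) - 1) + 1 := by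
      omega
    rw [hz]
    exact hC

end SP

theorem staircase_partition_into_actual_rectangles (i j z : ℕ)
    (hi : 1 ≤ i) (hj : 1 ≤ j) (hz : z = (i + j).choose i - 1) :
    ∃ C : Finset (Set (ℕ × ℕ)),
      C.card = z ∧
      (∀ R ∈ C, IsActualRect (Yd z) R) ∧
      (∀ R ∈ C, ∀ R' ∈ C, R ≠ R' → Disjoint R R') ∧
      (⋃ R ∈ C, R) = Yd z ∧
      IsLocal i j C := by
  subst hz
  obtain ⟨C, c1, c2, c3, c4, c5, c6⟩ := SP.main (i + j) i j hi hj le_rfl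
  exact ⟨C, c1, c2, c4, c5, c6⟩
end

section
/- For every i, j ≥ 1, the staircase Young diagram Y_z with z = C(i+j, i) steps admits no (i,j)-local cover by generalized rectangles: in every cover C of Y_z, some row is used by at least i+1 rectangles of C or some column is used by at least j+1 rectangles of C. -/
open scoped Classical

/-- A shifted staircase. -/
def Dstair (p q z : ℕ) : Set (ℕ × ℕ) :=
  {x | p + 1 ≤ x.1 ∧ q + 1 ≤ x.2 ∧ x.1 + x.2 ≤ p + q + z + 1}

lemma card_filter_image_le (C : Finset (Set (ℕ × ℕ))) (f : Set (ℕ × ℕ) → Set (ℕ × ℕ))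
    (P : Set (ℕ × ℕ) → Prop) :
    ((C.image f).filter P).card ≤ (C.filter (fun R => P (f R))).card := by
  have h : (C.image f).filter P ⊆ (C.filter (fun R => P (f R))).image f := by
    intro x hx
    rw [Finset.mem_filter] at hx
    obtain ⟨hx1, hx2⟩ := hx
    obtain ⟨R, hR, rfl⟩ := Finset.mem_image.mp hx1
    exact Finset.mem_image_of_mem f (Finset.mem_filter.mpr ⟨hR, hx2⟩)
  exact le_trans (Finset.card_le_card h) Finset.card_image_le

lemma filter_mono_imp (C : Finset (Set (ℕ × ℕ))) (P Q : Set (ℕ × ℕ) → Prop)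
    (h : ∀ R, P R → Q R) : C.filter P ⊆ C.filter Q := by
  intro x hx
  rw [Finset.mem_filter] at hx ⊢
  exact ⟨hx.1, h _ hx.2⟩

lemma inter_rowset_prod (S T : Set ℕ) (c : ℕ) :
    (S ×ˢ T) ∩ {x : ℕ × ℕ | c ≤ x.1} = (S ∩ Set.Ici c) ×ˢ T := by
  ext x
  simp only [Set.mem_inter_iff, Set.mem_prod, Set.mem_setOf_eq, Set.mem_Ici]
  tauto

lemma inter_colset_prod (S T : Set ℕ) (c : ℕ) :
    (S ×ˢ T) ∩ {x : ℕ × ℕ | c ≤ x.2} = S ×ˢ (T ∩ Set.Ici c) := by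
  ext x
  simp only [Set.mem_inter_iff, Set.mem_prod, Set.mem_setOf_eq, Set.mem_Ici]
  tauto

lemma key_staircase : ∀ n i j, i + j = n → ∀ p q (C : Finset (Set (ℕ × ℕ))),
    (∀ R ∈ C, (∃ S T : Set ℕ, R = S ×ˢ T) ∧ R ⊆ Dstair p q ((i + j).choose i)) →
    (Dstair p q ((i + j).choose i) ⊆ ⋃ R ∈ C, R) →
    (∃ s, i + 1 ≤ (C.filter (fun R => UsesRow R s)).card) ∨
    (∃ t, j + 1 ≤ (C.filter (fun R => UsesCol R t)).card) := by
  intro n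
  induction n using Nat.strong_induction_on with
  | _ n ih =>
  intro i j hn p q C hC hcov
  rcases i with _ | i'
  · -- i = 0 : staircase is a single point, some rectangle uses its row
    left
    have hz : (0 + j).choose 0 = 1 := Nat.choose_zero_right _
    have hx : ((p + 1, q + 1) : ℕ × ℕ) ∈ Dstair p q ((0 + j).choose 0) := by
      simp only [Dstair, Set.mem_setOf_eq, hz]; omega
    obtain ⟨R, hRC, hxR⟩ := by simpa using hcov hx
    refine ⟨p + 1, ?_⟩
    have : R ∈ C.filter (fun R => UsesRow R (p + 1)) :=
      Finset.mem_filter.mpr ⟨hRC, ⟨q + 1, hxR⟩⟩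
    exact Finset.card_pos.mpr ⟨R, this⟩
  rcases j with _ | j'
  · -- j = 0 : single point, some rectangle uses its column
    right
    have hz : (i' + 1 + 0).choose (i' + 1) = 1 := by
      rw [Nat.add_zero, Nat.choose_self]
    have hx : ((p + 1, q + 1) : ℕ × ℕ) ∈ Dstair p q ((i' + 1 + 0).choose (i' + 1)) := by
      simp only [Dstair, Set.mem_setOf_eq, hz]; omega
    obtain ⟨R, hRC, hxR⟩ := by simpa using hcov hx
    refine ⟨q + 1, ?_⟩
    have : R ∈ C.filter (fun R => UsesCol R (q + 1)) :=
      Finset.mem_filter.mpr ⟨hRC, ⟨p + 1, hxR⟩⟩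
    exact Finset.card_pos.mpr ⟨R, this⟩
  -- main case: i = i'+1 ≥ 1, j = j'+1 ≥ 1
  set z := (i' + 1 + (j' + 1)).choose (i' + 1) with hzdef
  set a := (i' + (j' + 1)).choose i' with hadef
  set b := (i' + 1 + j').choose (i' + 1) with hbdef
  have hab : a + b = z := by
    rw [hzdef, hadef, hbdef]
    have h1 : i' + 1 + (j' + 1) = (i' + (j' + 1)) + 1 := by omega
    have h2 : i' + 1 + j' = i' + (j' + 1) := by omega
    rw [h1, h2, Nat.choose_succ_succ]
  by_contra hcon
  push_neg at hcon
  obtain ⟨hrow, hcol⟩ := hcon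
  -- Step 1: the bottom block, a copy of the staircase of size b, shifted by (p+a, q)
  set E : Set (ℕ × ℕ) := {x | p + a + 1 ≤ x.1} with hEdef
  set CB : Finset (Set (ℕ × ℕ)) := C.image (· ∩ E) with hCBdef
  have hCB_rect : ∀ R' ∈ CB, (∃ S T : Set ℕ, R' = S ×ˢ T) ∧
      R' ⊆ Dstair (p + a) q ((i' + 1 + j').choose (i' + 1)) := by
    intro R' hR'
    obtain ⟨R, hRC, rfl⟩ := Finset.mem_image.mp hR'
    obtain ⟨⟨S, T, rfl⟩, hRsub⟩ := hC R hRC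
    constructor
    · exact ⟨S ∩ Set.Ici (p + a + 1), T, inter_rowset_prod S T (p + a + 1)⟩
    · intro x hx
      obtain ⟨hx1, hx2⟩ := hx
      have hD := hRsub hx1
      simp only [Dstair, Set.mem_setOf_eq] at hD ⊢
      simp only [hEdef, Set.mem_setOf_eq] at hx2
      rw [← hbdef]
      omega
  have hCB_cov : Dstair (p + a) q ((i' + 1 + j').choose (i' + 1)) ⊆ ⋃ R ∈ CB, R := by
    intro x hx
    simp only [Dstair, Set.mem_setOf_eq, ← hbdef] at hx
    have hxD : x ∈ Dstair p q z := by
      simp only [Dstair, Set.mem_setOf_eq]; omega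
    obtain ⟨R, hRC, hxR⟩ := by simpa using hcov hxD
    simp only [Set.mem_iUnion]
    refine ⟨R ∩ E, ?_, hxR, ?_⟩
    · simp only [hCBdef]
      exact Finset.mem_image_of_mem _ hRC
    · simp only [hEdef, Set.mem_setOf_eq]; omega
  have hB := ih (i' + 1 + j') (by omega) (i' + 1) j' rfl (p + a) q CB hCB_rect hCB_cov
  rcases hB with ⟨s, hs⟩ | ⟨t, ht⟩
  · -- a row is overused already in C : contradiction
    have h1 : (CB.filter (fun R => UsesRow R s)).card ≤
        (C.filter (fun R => UsesRow (R ∩ E) s)).card := card_filter_image_le C _ _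
    have h2 : (C.filter (fun R => UsesRow (R ∩ E) s)).card ≤
        (C.filter (fun R => UsesRow R s)).card := by
      apply Finset.card_le_card
      apply filter_mono_imp
      rintro R ⟨t₀, ht₀, -⟩
      exact ⟨t₀, ht₀⟩
    have := hrow s
    omega
  -- column t is used by j'+1 rectangles all meeting the bottom block
  set F : Finset (Set (ℕ × ℕ)) := C.filter (fun R => UsesCol (R ∩ E) t) with hFdef
  have hFcard : j' + 1 ≤ F.card := by
    have h1 : (CB.filter (fun R => UsesCol R t)).card ≤ F.card := card_filter_image_le C _ _
    omega
  have hFsub : F ⊆ C.filter (fun R => UsesCol R t) := by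
    apply filter_mono_imp
    rintro R ⟨s₀, hs₀, -⟩
    exact ⟨s₀, hs₀⟩
  have hFeq : F = C.filter (fun R => UsesCol R t) := by
    apply Finset.eq_of_subset_of_card_le hFsub
    have := hcol t
    have := Finset.card_le_card hFsub
    omega
  -- bounds on t
  have htbounds : q + 1 ≤ t ∧ t ≤ q + b := by
    have hne : F.Nonempty := Finset.card_pos.mp (by omega)
    obtain ⟨R₁, hR₁⟩ := hne
    rw [hFdef, Finset.mem_filter] at hR₁
    obtain ⟨hR₁C, s₁, hs₁R, hs₁E⟩ := hR₁
    have hD := (hC R₁ hR₁C).2 hs₁R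
    simp only [Dstair, Set.mem_setOf_eq] at hD
    simp only [hEdef, Set.mem_setOf_eq] at hs₁E
    omega
  -- Step 2: the left block, a copy of the staircase of size a, shifted by (p, q+b)
  set E' : Set (ℕ × ℕ) := {x | q + b + 1 ≤ x.2} with hE'def
  set CA : Finset (Set (ℕ × ℕ)) := C.image (· ∩ E') with hCAdef
  have hCA_rect : ∀ R' ∈ CA, (∃ S T : Set ℕ, R' = S ×ˢ T) ∧
      R' ⊆ Dstair p (q + b) ((i' + (j' + 1)).choose i') := by
    intro R' hR'
    obtain ⟨R, hRC, rfl⟩ := Finset.mem_image.mp hR'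
    obtain ⟨⟨S, T, rfl⟩, hRsub⟩ := hC R hRC
    constructor
    · exact ⟨S, T ∩ Set.Ici (q + b + 1), inter_colset_prod S T (q + b + 1)⟩
    · intro x hx
      obtain ⟨hx1, hx2⟩ := hx
      have hD := hRsub hx1
      simp only [Dstair, Set.mem_setOf_eq] at hD ⊢
      simp only [hE'def, Set.mem_setOf_eq] at hx2
      rw [← hadef]
      omega
  have hCA_cov : Dstair p (q + b) ((i' + (j' + 1)).choose i') ⊆ ⋃ R ∈ CA, R := by
    intro x hx
    simp only [Dstair, Set.mem_setOf_eq, ← hadef] at hx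
    have hxD : x ∈ Dstair p q z := by
      simp only [Dstair, Set.mem_setOf_eq]; omega
    obtain ⟨R, hRC, hxR⟩ := by simpa using hcov hxD
    simp only [Set.mem_iUnion]
    refine ⟨R ∩ E', ?_, hxR, ?_⟩
    · simp only [hCAdef]
      exact Finset.mem_image_of_mem _ hRC
    · simp only [hE'def, Set.mem_setOf_eq]; omega
  have hA := ih (i' + (j' + 1)) (by omega) i' (j' + 1) rfl p (q + b) CA hCA_rect hCA_cov
  rcases hA with ⟨s, hs⟩ | ⟨t', ht'⟩
  swap
  · -- a column is overused already in C : contradiction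
    have h1 : (CA.filter (fun R => UsesCol R t')).card ≤
        (C.filter (fun R => UsesCol (R ∩ E') t')).card := card_filter_image_le C _ _
    have h2 : (C.filter (fun R => UsesCol (R ∩ E') t')).card ≤
        (C.filter (fun R => UsesCol R t')).card := by
      apply Finset.card_le_card
      apply filter_mono_imp
      rintro R ⟨s₀, hs₀, -⟩
      exact ⟨s₀, hs₀⟩
    have := hcol t'
    omega
  -- row s used by i'+1 rectangles all meeting the left block
  set G : Finset (Set (ℕ × ℕ)) := C.filter (fun R => UsesRow (R ∩ E') s) with hGdef
  have hGcard : i' + 1 ≤ G.card := by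
    have h1 : (CA.filter (fun R => UsesRow R s)).card ≤ G.card := card_filter_image_le C _ _
    omega
  have hGsub : G ⊆ C.filter (fun R => UsesRow R s) := by
    apply filter_mono_imp
    rintro R ⟨t₀, ht₀, -⟩
    exact ⟨t₀, ht₀⟩
  -- bounds on s
  have hsbounds : p + 1 ≤ s ∧ s ≤ p + a := by
    have hne : G.Nonempty := Finset.card_pos.mp (by omega)
    obtain ⟨R₂, hR₂⟩ := hne
    rw [hGdef, Finset.mem_filter] at hR₂
    obtain ⟨hR₂C, t₂, ht₂R, ht₂E⟩ := hR₂
    have hD := (hC R₂ hR₂C).2 ht₂R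
    simp only [Dstair, Set.mem_setOf_eq] at hD
    simp only [hE'def, Set.mem_setOf_eq] at ht₂E
    omega
  -- the cell (s, t) is in the staircase; its covering rectangle uses column t,
  -- hence meets the bottom block, hence cannot meet the left block
  have hx₀ : ((s, t) : ℕ × ℕ) ∈ Dstair p q z := by
    simp only [Dstair, Set.mem_setOf_eq]; omega
  obtain ⟨R₀, hR₀C, hxR₀⟩ := by simpa using hcov hx₀
  have hR₀F : R₀ ∈ F := by
    rw [hFeq, Finset.mem_filter]
    exact ⟨hR₀C, ⟨s, hxR₀⟩⟩
  rw [hFdef, Finset.mem_filter] at hR₀F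
  obtain ⟨-, s₂, hs₂R, hs₂E⟩ := hR₀F
  simp only [hEdef, Set.mem_setOf_eq] at hs₂E
  have hR₀G : R₀ ∉ G := by
    rw [hGdef, Finset.mem_filter]
    rintro ⟨-, t₃, ht₃R, ht₃E⟩
    simp only [hE'def, Set.mem_setOf_eq] at ht₃E
    obtain ⟨⟨S, T, rfl⟩, hRsub⟩ := hC R₀ hR₀C
    have hs₂S : s₂ ∈ S := hs₂R.1
    have ht₃T : t₃ ∈ T := ht₃R.2
    have : ((s₂, t₃) : ℕ × ℕ) ∈ S ×ˢ T := ⟨hs₂S, ht₃T⟩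
    have hD := hRsub this
    simp only [Dstair, Set.mem_setOf_eq] at hD
    omega
  have hins : insert R₀ G ⊆ C.filter (fun R => UsesRow R s) := by
    intro x hx
    rcases Finset.mem_insert.mp hx with rfl | hx
    · exact Finset.mem_filter.mpr ⟨hR₀C, ⟨t, hxR₀⟩⟩
    · exact hGsub hx
  have hcard := Finset.card_le_card hins
  rw [Finset.card_insert_of_notMem hR₀G] at hcard
  have := hrow s
  omega

theorem staircase_no_local_cover (i j z : ℕ)
    (hi : 1 ≤ i) (hj : 1 ≤ j) (hz : z = (i + j).choose i) :
    ∀ C : Finset (Set (ℕ × ℕ)), IsCover (Yd z) C →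
      (∃ s, i + 1 ≤ (C.filter (fun R => UsesRow R s)).card) ∨
      (∃ t, j + 1 ≤ (C.filter (fun R => UsesCol R t)).card) := by
  intro C hCov
  have hYD : Yd z = Dstair 0 0 ((i + j).choose i) := by
    rw [← hz]
    ext x
    simp only [Yd, Dstair, Set.mem_setOf_eq, Set.mem_Icc]
    omega
  obtain ⟨hrect, huni⟩ := hCov
  apply key_staircase (i + j) i j rfl 0 0 C
  · intro R hR
    have := hrect R hR
    rw [IsRect, hYD] at this
    exact this
  · rw [← hYD, ← huni]
end

section
/- For every k ≥ 1, any Young diagram Y can be covered by generalized rectangles with each row and each column of Y used by at most k rectangles if and only if Y has strictly fewer than C(2k, k) steps. -/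
open scoped Classical

/-!
Order the steps `p₀, …, pₙ₋₁` of `Y` by row. Given an `(i, j)`-local cover, let `Aₘ`, `Bₘ` be the
rectangles using the row, resp. the column, of `pₘ`. A rectangle `S ×ˢ T` uses row `s` and column
`t` exactly when it contains the cell `(s, t)`, so `Aₐ ∩ B_b ≠ ∅` iff the cell
(row of `pₐ`, column of `p_b`) lies in `Y`, iff `a ≤ b`. Such a staircase system with
`|Aₘ| ≤ i`, `|Bₘ| ≤ j` has fewer than `C(i + j, i)` members, by induction on `i + j`: let `c` be
the last index such that every `Aₐ` with `a < c` has an element avoided by all `B_b` with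
`a ≤ b < c`. Deleting those elements turns the indices below `c` into a system with sizes
`(i - 1, j)`; maximality of `c` gives every `B_b` with `b > c` an element avoided by all `Aₐ` with
`c < a ≤ b`, so the indices above `c` form a system with sizes `(i, j - 1)`. Pascal's rule
concludes.

Conversely, pick a step `p` with fewer than `C(i + j - 1, i - 1)` steps in rows `< p.1` and fewer
than `C(i + j - 1, i)` in rows `> p.1`. These are the steps of the diagrams formed by the cells in
columns `> p.2` and by those in rows `> p.1`; by induction they have `(i - 1, j)`- and
`(i, j - 1)`-local covers, and adding the rectangle `[1, p.1] × [1, p.2]` gives an `(i, j)`-local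
cover of `Y`.
-/

open Finset

section Staircase

variable {ι α : Type*} [LinearOrder ι]

def IsStaircase (s : Finset ι) (A B : ι → Finset α) : Prop :=
  ∀ a ∈ s, ∀ b ∈ s, ((A a ∩ B b).Nonempty ↔ a ≤ b)

def LeftPrivate (s : Finset ι) (A B : ι → Finset α) : Prop :=
  ∀ a ∈ s, ∃ x ∈ A a, ∀ b ∈ s, a ≤ b → x ∉ B b

def RightPrivate (s : Finset ι) (A B : ι → Finset α) : Prop :=
  ∀ b ∈ s, ∃ y ∈ B b, ∀ a ∈ s, a ≤ b → y ∉ A a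

namespace IsStaircase

variable {s t : Finset ι} {A B : ι → Finset α}

theorem mono (h : IsStaircase s A B) (hts : t ⊆ s) : IsStaircase t A B :=
  fun a ha b hb => h a (hts ha) b (hts hb)

theorem dual (h : IsStaircase s A B) : IsStaircase (ι := ιᵒᵈ) s B A :=
  fun a ha b hb => by rw [inter_comm]; exact h b hb a ha

theorem card_pos_left (h : IsStaircase s A B) {a : ι} (ha : a ∈ s) : 0 < #(A a) :=
  card_pos.2 (((h a ha a ha).2 le_rfl).mono inter_subset_left)

theorem card_pos_right (h : IsStaircase s A B) {b : ι} (hb : b ∈ s) : 0 < #(B b) :=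
  card_pos.2 (((h b hb b hb).2 le_rfl).mono inter_subset_right)

theorem exists_trim_left (h : IsStaircase s A B) (hp : LeftPrivate s A B) :
    ∃ A' : ι → Finset α, (∀ a ∈ s, #(A' a) < #(A a)) ∧ IsStaircase s A' B := by
  refine ⟨fun a => (A a).filter fun x => ∃ b ∈ s, a ≤ b ∧ x ∈ B b, fun a ha => ?_,
    fun a ha b hb => ⟨fun hne => ?_, fun hab => ?_⟩⟩
  · obtain ⟨x, hx, hxB⟩ := hp a ha
    exact card_lt_card (filter_ssubset.2 ⟨x, hx, fun ⟨b, hb, hab, hxb⟩ => hxB b hb hab hxb⟩)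
  · exact (h a ha b hb).1 (hne.mono (inter_subset_inter_right (filter_subset _ _)))
  · obtain ⟨x, hx⟩ := (h a ha b hb).2 hab
    rw [mem_inter] at hx
    exact ⟨x, mem_inter.2 ⟨mem_filter.2 ⟨hx.1, b, hb, hab, hx.2⟩, hx.2⟩⟩

theorem exists_trim_right (h : IsStaircase s A B) (hp : RightPrivate s A B) :
    ∃ B' : ι → Finset α, (∀ b ∈ s, #(B' b) < #(B b)) ∧ IsStaircase s A B' := by
  obtain ⟨B', hcard, h'⟩ := h.dual.exists_trim_left hp
  exact ⟨B', hcard, h'.dual⟩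

theorem exists_split (h : IsStaircase s A B) (hs : s.Nonempty) :
    ∃ c ∈ s, LeftPrivate (s.filter (· < c)) A B ∧ RightPrivate (s.filter (c < ·)) A B := by
  set G := s.filter fun c => LeftPrivate (s.filter (· < c)) A B
  have hG : G.Nonempty := ⟨s.min' hs, mem_filter.2 ⟨min'_mem _ _, fun a ha =>
    absurd (mem_filter.1 ha).2 (not_lt.2 (min'_le _ _ (mem_filter.1 ha).1))⟩⟩
  obtain ⟨hcs, hc⟩ := mem_filter.1 (G.max'_mem hG)
  refine ⟨G.max' hG, hcs, hc, fun b hb => ?_⟩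
  set c := G.max' hG
  obtain ⟨hbs, hcb⟩ := mem_filter.1 hb
  -- `d` is the successor of `c` in `s`
  set d := (s.filter (c < ·)).min' ⟨b, hb⟩
  obtain ⟨hds, hcd⟩ := mem_filter.1 (min'_mem (s.filter (c < ·)) ⟨b, hb⟩)
  have hle : ∀ x ∈ s, x < d → x ≤ c := fun x hx hxd =>
    not_lt.1 fun hcx => not_le.2 hxd (min'_le _ x (mem_filter.2 ⟨hx, hcx⟩))
  have hdG : ¬ LeftPrivate (s.filter (· < d)) A B := fun hd =>
    not_le.2 hcd (G.le_max' d (mem_filter.2 ⟨hds, hd⟩))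
  simp only [LeftPrivate, mem_filter, not_forall, not_exists, not_and, not_not] at hdG
  obtain ⟨a₀, ⟨ha₀s, ha₀d⟩, hcover⟩ := hdG
  obtain ⟨z, hz⟩ := (h a₀ ha₀s b hbs).2 ((hle a₀ ha₀s ha₀d).trans hcb.le)
  rw [mem_inter] at hz
  obtain ⟨b', ⟨hb's, hb'd⟩, -, hzb'⟩ := hcover z hz.1
  refine ⟨z, hz.2, fun a ha _ hza => ?_⟩
  obtain ⟨has, hca⟩ := mem_filter.1 ha
  have hab' := (h a has b' hb's).1 ⟨z, mem_inter.2 ⟨hza, hzb'⟩⟩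
  exact not_le.2 hca (hab'.trans (hle b' hb's hb'd))

theorem card_lt_choose {i j : ℕ} (h : IsStaircase s A B) (hA : ∀ a ∈ s, #(A a) ≤ i)
    (hB : ∀ b ∈ s, #(B b) ≤ j) : #s < (i + j).choose i := by
  induction i generalizing j s A B with
  | zero =>
    rw [Nat.choose_zero_right, Nat.lt_one_iff, card_eq_zero, eq_empty_iff_forall_notMem]
    exact fun a ha => (h.card_pos_left ha).ne' (Nat.le_zero.1 (hA a ha))
  | succ i ihi =>
  induction j generalizing s A B with
  | zero =>
    rw [add_zero, Nat.choose_self, Nat.lt_one_iff, card_eq_zero, eq_empty_iff_forall_notMem]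
    exact fun b hb => (h.card_pos_right hb).ne' (Nat.le_zero.1 (hB b hb))
  | succ j ihj =>
  rcases s.eq_empty_or_nonempty with rfl | hs
  · exact Nat.choose_pos (by omega)
  obtain ⟨c, hc, hleft, hright⟩ := h.exists_split hs
  have hL : #(s.filter (· < c)) < (i + (j + 1)).choose i := by
    obtain ⟨A', hA', h'⟩ := (h.mono (filter_subset _ _)).exists_trim_left hleft
    refine ihi h' (fun a ha => ?_) fun b hb => hB b (filter_subset _ _ hb)
    have := hA a (filter_subset _ _ ha)
    have := hA' a ha
    omega
  have hR : #(s.filter (c < ·)) < (i + 1 + j).choose (i + 1) := by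
    obtain ⟨B', hB', h'⟩ := (h.mono (filter_subset _ _)).exists_trim_right hright
    refine ihj h' (fun a ha => hA a (filter_subset _ _ ha)) fun b hb => ?_
    have := hB b (filter_subset _ _ hb)
    have := hB' b hb
    omega
  have hcover : s ⊆ s.filter (· < c) ∪ insert c (s.filter (c < ·)) := fun x hx => by
    rcases lt_trichotomy x c with hxc | rfl | hcx <;> simp [*]
  have hcard := (card_le_card hcover).trans (card_union_le _ _)
  have hins := card_insert_le c (s.filter (c < ·))
  rw [show i + 1 + j = i + (j + 1) by omega] at hR
  rw [show i + 1 + (j + 1) = i + (j + 1) + 1 by omega, Nat.choose_succ_succ']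
  omega

end IsStaircase

theorem Finset.exists_card_filter_lt_lt {s : Finset ι} (hs : s.Nonempty) {m n : ℕ} (hm : 0 < m)
    (hn : 0 < n) (h : #s < m + n) :
    ∃ c ∈ s, #(s.filter (· < c)) < m ∧ #(s.filter (c < ·)) < n := by
  induction s using Finset.induction_on_max generalizing n with
  | empty => exact absurd hs (by simp)
  | insert a t hta ih =>
    have hat : a ∉ t := fun ha => lt_irrefl a (hta a ha)
    by_cases htm : #t < m
    · refine ⟨a, mem_insert_self a t, ?_, ?_⟩
      · rwa [filter_insert, if_neg (lt_irrefl a), filter_true_of_mem hta]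
      · rwa [filter_insert, if_neg (lt_irrefl a),
          filter_false_of_mem fun x hx => not_lt.2 (hta x hx).le, card_empty]
    · rw [card_insert_of_notMem hat] at h
      obtain ⟨c, hct, hlt, hgt⟩ :=
        ih (card_pos.1 (by omega)) (n := n - 1) (by omega) (by omega)
      refine ⟨c, mem_insert_of_mem hct, ?_, ?_⟩
      · rwa [filter_insert, if_neg (not_lt.2 (hta c hct).le)]
      · rw [filter_insert, if_pos (hta c hct)]
        exact (card_insert_le _ _).trans_lt (by omega)

end Staircase

theorem Finset.card_filter_insert_union_le {β : Type*} (P : β → Prop) (a : β)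
    (s t : Finset β) :
    #((insert a (s ∪ t)).filter P) ≤
      #(({a} : Finset β).filter P) + #(s.filter P) + #(t.filter P) := by
  rw [insert_eq, filter_union, filter_union]
  have := card_union_le (s.filter P) (t.filter P)
  exact (card_union_le _ _).trans (by omega)

-- Cutting a diagram along a step leaves diagrams of this kind with a shifted corner `o`.
def IsDiagramFrom (o : ℕ × ℕ) (Y : Set (ℕ × ℕ)) : Prop :=
  ∀ p ∈ Y, o ≤ p ∧ Set.Icc o p ⊆ Y

theorem IsYoung.isDiagramFrom {r c : ℕ} {Y : Set (ℕ × ℕ)} (hY : IsYoung r c Y) :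
    IsDiagramFrom (1, 1) Y := by
  have hrow : ∀ {s t s'}, (s, t) ∈ Y → 1 ≤ s' → s' ≤ s → (s', t) ∈ Y := by
    intro s t s' hst h1 hs
    induction s, hs using Nat.le_induction with
    | base => exact hst
    | succ n hn ih => exact ih (by simpa using (hY.2 _ hst).1 (by omega))
  have hcol : ∀ {s t t'}, (s, t) ∈ Y → 1 ≤ t' → t' ≤ t → (s, t') ∈ Y := by
    intro s t t' hst h1 ht
    induction t, ht using Nat.le_induction with
    | base => exact hst
    | succ n hn ih => exact ih (by simpa using (hY.2 _ hst).2 (by omega))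
  intro p hp
  obtain ⟨⟨hp1, -⟩, hp2, -⟩ := hY.1 hp
  exact ⟨⟨hp1, hp2⟩, fun q ⟨⟨hq1, hq2⟩, hqp1, hqp2⟩ => hcol (hrow hp hq1 hqp1) hq2 hqp2⟩

theorem steps_nonempty {Y : Set (ℕ × ℕ)} (hfin : Y.Finite) (hY : Y.Nonempty) :
    (steps Y).Nonempty := by
  obtain ⟨p, hp⟩ := hfin.exists_maximal hY
  refine ⟨p, hp.1, fun h => ?_, fun h => ?_⟩
  · simpa [Prod.le_def] using hp.2 h (Prod.le_def.2 ⟨Nat.le_succ _, le_rfl⟩)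
  · simpa [Prod.le_def] using hp.2 h (Prod.le_def.2 ⟨le_rfl, Nat.le_succ _⟩)

theorem steps_inter_Ici (Y : Set (ℕ × ℕ)) (o : ℕ × ℕ) :
    steps (Y ∩ Set.Ici o) = steps Y ∩ Set.Ici o := by
  ext q
  simp only [steps, IsStep, Set.mem_ofPred_eq, Set.mem_inter_iff, Set.mem_Ici, Prod.le_def]
  constructor
  · rintro ⟨⟨hq, hoq⟩, h1, h2⟩
    exact ⟨⟨hq, fun h => h1 ⟨h, by omega⟩, fun h => h2 ⟨h, by omega⟩⟩, hoq⟩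
  · rintro ⟨⟨hq, h1, h2⟩, hoq⟩
    exact ⟨⟨hq, hoq⟩, fun h => h1 h.1, fun h => h2 h.1⟩

namespace IsCover

variable {Y : Set (ℕ × ℕ)} {C : Finset (Set (ℕ × ℕ))}

theorem inter_nonempty_iff (hC : IsCover Y C) (s t : ℕ) :
    (C.filter (UsesRow · s) ∩ C.filter (UsesCol · t)).Nonempty ↔ (s, t) ∈ Y := by
  constructor
  · rintro ⟨R, hR⟩
    simp only [mem_inter, mem_filter] at hR
    obtain ⟨⟨hRC, t', ht'⟩, -, s', hs'⟩ := hR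
    obtain ⟨⟨S, T, rfl⟩, hRY⟩ := hC.1 R hRC
    exact hRY ⟨ht'.1, hs'.2⟩
  · intro hst
    rw [← hC.2, Set.mem_iUnion₂] at hst
    obtain ⟨R, hRC, hR⟩ := hst
    exact ⟨R, mem_inter.2 ⟨mem_filter.2 ⟨hRC, t, hR⟩, mem_filter.2 ⟨hRC, s, hR⟩⟩⟩

theorem filter_usesRow_eq_empty (hC : IsCover Y C) {s : ℕ} (hs : ∀ t, (s, t) ∉ Y) :
    C.filter (UsesRow · s) = ∅ :=
  filter_eq_empty_iff.2 fun R hR ⟨t, ht⟩ => hs t ((hC.1 R hR).2 ht)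

theorem filter_usesCol_eq_empty (hC : IsCover Y C) {t : ℕ} (ht : ∀ s, (s, t) ∉ Y) :
    C.filter (UsesCol · t) = ∅ :=
  filter_eq_empty_iff.2 fun R hR ⟨s, hs⟩ => ht s ((hC.1 R hR).2 hs)

end IsCover

namespace IsDiagramFrom

variable {o p q : ℕ × ℕ} {Y : Set (ℕ × ℕ)}

theorem mem_of_le (h : IsDiagramFrom o Y) (hp : p ∈ Y) (hoq : o ≤ q) (hqp : q ≤ p) : q ∈ Y :=
  (h p hp).2 ⟨hoq, hqp⟩

theorem inter_Ici {o' : ℕ × ℕ} (h : IsDiagramFrom o Y) (ho : o ≤ o') :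
    IsDiagramFrom o' (Y ∩ Set.Ici o') := fun p ⟨hp, hop⟩ =>
  ⟨hop, fun _ hq => ⟨(h p hp).2 ⟨ho.trans hq.1, hq.2⟩, hq.1⟩⟩

theorem mem_iff_fst_le (h : IsDiagramFrom o Y) (hp : IsStep Y p) (hq : IsStep Y q) :
    (p.1, q.2) ∈ Y ↔ p.1 ≤ q.1 := by
  obtain ⟨hop, -⟩ := h p hp.1
  obtain ⟨hoq, -⟩ := h q hq.1
  refine ⟨fun hpq => not_lt.1 fun hqp => hq.2.1 (h.mem_of_le hpq ?_ ?_), fun hpq =>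
    h.mem_of_le hq.1 ⟨hop.1, hoq.2⟩ ⟨hpq, le_rfl⟩⟩
  · exact ⟨hoq.1.trans (Nat.le_succ _), hoq.2⟩
  · exact ⟨hqp, le_rfl⟩

theorem mem_iff_snd_le (h : IsDiagramFrom o Y) (hp : IsStep Y p) (hq : IsStep Y q) :
    (p.1, q.2) ∈ Y ↔ q.2 ≤ p.2 := by
  obtain ⟨hop, -⟩ := h p hp.1
  obtain ⟨hoq, -⟩ := h q hq.1
  refine ⟨fun hpq => not_lt.1 fun hpq' => hp.2.2 (h.mem_of_le hpq ?_ ?_), fun hqp =>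
    h.mem_of_le hp.1 ⟨hop.1, hoq.2⟩ ⟨le_rfl, hqp⟩⟩
  · exact ⟨hop.1, hop.2.trans (Nat.le_succ _)⟩
  · exact ⟨le_rfl, hpq'⟩

theorem fst_le_iff_snd_le (h : IsDiagramFrom o Y) (hp : IsStep Y p) (hq : IsStep Y q) :
    p.1 ≤ q.1 ↔ q.2 ≤ p.2 :=
  (h.mem_iff_fst_le hp hq).symm.trans (h.mem_iff_snd_le hp hq)

theorem toLex_le_iff (h : IsDiagramFrom o Y) (hp : IsStep Y p) (hq : IsStep Y q) :
    toLex p ≤ toLex q ↔ p.1 ≤ q.1 := by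
  have := h.fst_le_iff_snd_le hq hp
  rw [Prod.Lex.toLex_le_toLex]
  omega

theorem toLex_lt_iff (h : IsDiagramFrom o Y) (hp : IsStep Y p) (hq : IsStep Y q) :
    toLex p < toLex q ↔ p.1 < q.1 := by
  rw [lt_iff_not_ge, h.toLex_le_iff hq hp, not_le]

theorem ncard_steps_lt_choose {i j : ℕ} {C : Finset (Set (ℕ × ℕ))} (h : IsDiagramFrom o Y)
    (hsf : (steps Y).Finite) (hC : IsLocalCover i j Y C) : (steps Y).ncard < (i + j).choose i := by
  rw [Set.ncard_eq_toFinset_card _ hsf, ← card_map toLex.toEmbedding]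
  refine IsStaircase.card_lt_choose (A := fun x => C.filter (UsesRow · (ofLex x).1))
    (B := fun x => C.filter (UsesCol · (ofLex x).2)) (fun x hx y hy => ?_)
    (fun _ _ => hC.2.1 _) fun _ _ => hC.2.2 _
  simp only [mem_map_equiv, Set.Finite.mem_toFinset] at hx hy
  exact (hC.1.inter_nonempty_iff _ _).trans
    ((h.mem_iff_fst_le hx hy).trans (h.toLex_le_iff hx hy).symm)

theorem union_eq (h : IsDiagramFrom o Y) (hp : p ∈ Y) :
    Set.Icc o p ∪ (Y ∩ Set.Ici (o.1, p.2 + 1)) ∪ (Y ∩ Set.Ici (p.1 + 1, o.2)) = Y := by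
  refine (Set.union_subset (Set.union_subset (h p hp).2 Set.inter_subset_left)
    Set.inter_subset_left).antisymm fun q hq => ?_
  have hoq := (h q hq).1
  simp only [Set.mem_union, Set.mem_inter_iff, Set.mem_Icc, Set.mem_Ici, Prod.le_def, hq,
    true_and] at hoq ⊢
  omega

theorem ncard_steps_inter_Ici_lt (h : IsDiagramFrom o Y) (hp : IsStep Y p)
    (hsf : (steps Y).Finite) :
    (steps (Y ∩ Set.Ici (o.1, p.2 + 1))).ncard
      = #((hsf.toFinset.map toLex.toEmbedding).filter (· < toLex p)) := by
  rw [steps_inter_Ici, filter_map, card_map, ← Set.ncard_coe_finset]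
  congr 1
  ext q
  simp only [coe_filter, Set.Finite.mem_toFinset, Set.mem_inter_iff, Set.mem_Ici,
    Function.comp_apply, Equiv.toEmbedding_apply, Set.mem_ofPred_eq]
  refine and_congr_right fun hq => ?_
  have hoq := Prod.le_def.1 (h q hq.1).1
  have := h.fst_le_iff_snd_le hp hq
  rw [h.toLex_lt_iff hq hp, Prod.le_def]
  omega

theorem ncard_steps_inter_Ici_gt (h : IsDiagramFrom o Y) (hp : IsStep Y p)
    (hsf : (steps Y).Finite) :
    (steps (Y ∩ Set.Ici (p.1 + 1, o.2))).ncard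
      = #((hsf.toFinset.map toLex.toEmbedding).filter (toLex p < ·)) := by
  rw [steps_inter_Ici, filter_map, card_map, ← Set.ncard_coe_finset]
  congr 1
  ext q
  simp only [coe_filter, Set.Finite.mem_toFinset, Set.mem_inter_iff, Set.mem_Ici,
    Function.comp_apply, Equiv.toEmbedding_apply, Set.mem_ofPred_eq]
  refine and_congr_right fun hq => ?_
  have hoq := Prod.le_def.1 (h q hq.1).1
  rw [h.toLex_lt_iff hp hq, Prod.le_def]
  omega

theorem fst_lt_of_mem_inter_Ici (h : IsDiagramFrom o Y) (hp : IsStep Y p)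
    (hq : q ∈ Y ∩ Set.Ici (o.1, p.2 + 1)) : q.1 < p.1 := by
  have hop := Prod.le_def.1 (h p hp.1).1
  have hpq := Prod.le_def.1 hq.2
  refine not_le.1 fun hpq' => hp.2.2 (h.mem_of_le hq.1 ?_ ?_) <;>
    rw [Prod.le_def] <;> dsimp only <;> omega

theorem snd_lt_of_mem_inter_Ici (h : IsDiagramFrom o Y) (hp : IsStep Y p)
    (hq : q ∈ Y ∩ Set.Ici (p.1 + 1, o.2)) : q.2 < p.2 := by
  have hop := Prod.le_def.1 (h p hp.1).1
  have hpq := Prod.le_def.1 hq.2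
  refine not_le.1 fun hpq' => hp.2.1 (h.mem_of_le hq.1 ?_ ?_) <;>
    rw [Prod.le_def] <;> dsimp only <;> omega

theorem isCover_insert_union {C₁ C₂ : Finset (Set (ℕ × ℕ))} (h : IsDiagramFrom o Y)
    (hp : p ∈ Y) (h₁ : IsCover (Y ∩ Set.Ici (o.1, p.2 + 1)) C₁)
    (h₂ : IsCover (Y ∩ Set.Ici (p.1 + 1, o.2)) C₂) :
    IsCover Y (insert (Set.Icc o p) (C₁ ∪ C₂)) := by
  refine ⟨fun R hR => ?_, ?_⟩
  · rcases mem_insert.1 hR with rfl | hR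
    · exact ⟨⟨_, _, (Set.Icc_prod_Icc _ _ _ _).symm⟩, (h p hp).2⟩
    rcases mem_union.1 hR with hR | hR
    · exact ⟨(h₁.1 R hR).1, (h₁.1 R hR).2.trans Set.inter_subset_left⟩
    · exact ⟨(h₂.1 R hR).1, (h₂.1 R hR).2.trans Set.inter_subset_left⟩
  · rw [set_biUnion_insert, set_biUnion_union, h₁.2, h₂.2, ← Set.union_assoc, h.union_eq hp]

theorem isLocalCover_insert_union {i j : ℕ} {C₁ C₂ : Finset (Set (ℕ × ℕ))}
    (h : IsDiagramFrom o Y) (hp : IsStep Y p)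
    (h₁ : IsLocalCover i (j + 1) (Y ∩ Set.Ici (o.1, p.2 + 1)) C₁)
    (h₂ : IsLocalCover (i + 1) j (Y ∩ Set.Ici (p.1 + 1, o.2)) C₂) :
    IsLocalCover (i + 1) (j + 1) Y (insert (Set.Icc o p) (C₁ ∪ C₂)) := by
  refine ⟨h.isCover_insert_union hp.1 h₁.1 h₂.1,
    fun s => (card_filter_insert_union_le _ _ _ _).trans ?_,
    fun t => (card_filter_insert_union_le _ _ _ _).trans ?_⟩
  · by_cases hs : s ≤ p.1
    · rw [h₂.1.filter_usesRow_eq_empty fun t ht => by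
        simp only [Set.mem_inter_iff, Set.mem_Ici, Prod.le_def] at ht; omega]
      have := (card_filter_le {Set.Icc o p} (UsesRow · s)).trans (card_singleton _).le
      have := h₁.2.1 s
      simp only [card_empty]
      omega
    · rw [filter_singleton, if_neg fun ⟨_, ht⟩ => hs ht.2.1,
        h₁.1.filter_usesRow_eq_empty fun t ht => by
          have := h.fst_lt_of_mem_inter_Ici hp ht; omega]
      simpa using h₂.2.1 s
  · by_cases ht : t ≤ p.2
    · rw [h₁.1.filter_usesCol_eq_empty fun s hs => by
        simp only [Set.mem_inter_iff, Set.mem_Ici, Prod.le_def] at hs; omega]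
      have := (card_filter_le {Set.Icc o p} (UsesCol · t)).trans (card_singleton _).le
      have := h₂.2.2 t
      simp only [card_empty]
      omega
    · rw [filter_singleton, if_neg fun ⟨_, hs⟩ => ht hs.2.2,
        h₂.1.filter_usesCol_eq_empty fun s hs => by
          have := h.snd_lt_of_mem_inter_Ici hp hs; omega]
      simpa using h₁.2.2 t

theorem exists_isLocalCover {i j : ℕ} (h : IsDiagramFrom o Y) (hfin : Y.Finite)
    (hn : (steps Y).ncard < (i + j).choose i) : ∃ C, IsLocalCover i j Y C := by
  induction hN : (steps Y).ncard using Nat.strong_induction_on generalizing o Y i j with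
  | _ n ih =>
  rcases Y.eq_empty_or_nonempty with rfl | hY
  · exact ⟨∅, ⟨by simp, by simp⟩, by simp, by simp⟩
  have hsf : (steps Y).Finite := hfin.subset fun _ hq => hq.1
  set S := hsf.toFinset.map toLex.toEmbedding
  have hS : #S = n := by rw [card_map, ← Set.ncard_eq_toFinset_card _ hsf, hN]
  have hSne : S.Nonempty := by simpa [S] using steps_nonempty hfin hY
  have hn0 : 0 < n := hS ▸ hSne.card_pos
  obtain ⟨i, rfl⟩ : ∃ i', i = i' + 1 :=
    Nat.exists_eq_succ_of_ne_zero (by rintro rfl; simp at hn; omega)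
  obtain ⟨j, rfl⟩ : ∃ j', j = j' + 1 :=
    Nat.exists_eq_succ_of_ne_zero (by rintro rfl; simp at hn; omega)
  rw [hN, show i + 1 + (j + 1) = i + (j + 1) + 1 by omega, Nat.choose_succ_succ'] at hn
  obtain ⟨x, hxS, hlt, hgt⟩ := S.exists_card_filter_lt_lt hSne (Nat.choose_pos (by omega))
    (Nat.choose_pos (by omega)) (hS ▸ hn)
  obtain ⟨p, hp, rfl⟩ : ∃ p ∈ steps Y, toLex p = x := ⟨ofLex x, by simpa [S] using hxS, rfl⟩
  have hop := Prod.le_def.1 (h p hp.1).1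
  have hcard_filter : ∀ (P : Lex (ℕ × ℕ) → Prop) [DecidablePred P], ¬ P (toLex p) →
      #(S.filter P) < n := fun P _ hP => hS ▸ card_lt_card (filter_ssubset.2 ⟨_, hxS, hP⟩)
  obtain ⟨C₁, hC₁⟩ := ih _ (hcard_filter (· < toLex p) (lt_irrefl _))
    (h.inter_Ici (o' := (o.1, p.2 + 1)) (Prod.le_def.2 ⟨le_rfl, by omega⟩))
    (hfin.subset Set.inter_subset_left) (by rwa [h.ncard_steps_inter_Ici_lt hp hsf])
    (h.ncard_steps_inter_Ici_lt hp hsf)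
  obtain ⟨C₂, hC₂⟩ := ih _ (hcard_filter (toLex p < ·) (lt_irrefl _))
    (h.inter_Ici (o' := (p.1 + 1, o.2)) (Prod.le_def.2 ⟨by omega, le_rfl⟩))
    (hfin.subset Set.inter_subset_left)
    (by rwa [h.ncard_steps_inter_Ici_gt hp hsf, show i + 1 + j = i + (j + 1) by omega])
    (h.ncard_steps_inter_Ici_gt hp hsf)
  exact ⟨_, h.isLocalCover_insert_union hp hC₁ hC₂⟩

end IsDiagramFrom

theorem main_theorem_general (k r c : ℕ) (Y : Set (ℕ × ℕ))
    (hY : IsYoung r c Y) :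
    (∃ C : Finset (Set (ℕ × ℕ)), IsLocalCover k k Y C) ↔
    (steps Y).ncard < (2 * k).choose k := by
  have hfin : Y.Finite := ((Set.finite_Icc 1 r).prod (Set.finite_Icc 1 c)).subset hY.1
  have hD := hY.isDiagramFrom
  rw [two_mul]
  exact ⟨fun ⟨_, hC⟩ => hD.ncard_steps_lt_choose (hfin.subset fun _ hp => hp.1) hC,
    hD.exists_isLocalCover hfin⟩

theorem main_theorem (k r c : ℕ) (hk : 1 ≤ k) (Y : Set (ℕ × ℕ))
    (hY : IsYoung r c Y) :
    (∃ C : Finset (Set (ℕ × ℕ)), IsLocalCover k k Y C) ↔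
    (steps Y).ncard < (2 * k).choose k :=
  main_theorem_general k r c Y hY
end

section
/- A (1,j)-local cover of the staircase Y_z by generalized rectangles exists if and only if z ≤ j: in any cover of Y_z in which every row is used by exactly one rectangle, each rectangle is a single full row of Y_z, and hence the first column is used by z rectangles. -/
open scoped Classical

section Aux

lemma mem_Yd_iff {z s t : ℕ} :
    (s, t) ∈ Yd z ↔ 1 ≤ s ∧ s ≤ z ∧ 1 ≤ t ∧ t ≤ z ∧ s + t ≤ z + 1 := by
  simp [Yd, Set.mem_Icc]; omega

lemma struct_aux (z : ℕ) (C : Finset (Set (ℕ × ℕ))) (hC : IsCover (Yd z) C)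
    (hrow : ∀ s ∈ Set.Icc 1 z, (C.filter (fun R => UsesRow R s)).card = 1) :
    ∀ R ∈ C, R.Nonempty → ∃ s ∈ Set.Icc 1 z, R = ({s} : Set ℕ) ×ˢ Set.Icc 1 (z + 1 - s) := by
  intro R hR hRne
  obtain ⟨⟨S, T, rfl⟩, hsub⟩ := hC.1 R hR
  obtain ⟨⟨s, t⟩, hst⟩ := hRne
  rw [Set.mem_prod] at hst
  obtain ⟨hsS, htT⟩ := hst
  have hYmem : ∀ s' ∈ S, ∀ t' ∈ T, (s', t') ∈ Yd z := fun s' hs' t' ht' =>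
    hsub (Set.mk_mem_prod hs' ht')
  have key : ∀ s' ∈ S, T = Set.Icc 1 (z + 1 - s') := by
    intro s' hs'
    have hs'Y := mem_Yd_iff.1 (hYmem s' hs' t htT)
    ext t'
    simp only [Set.mem_Icc]
    constructor
    · intro ht'
      have h := mem_Yd_iff.1 (hYmem s' hs' t' ht')
      omega
    · rintro ⟨h1, h2⟩
      have hmem : (s', t') ∈ Yd z := mem_Yd_iff.2 (by omega)
      rw [← hC.2] at hmem
      simp only [Set.mem_iUnion] at hmem
      obtain ⟨R', hR'C, hR'mem⟩ := hmem
      have hcard := hrow s' ⟨hs'Y.1, hs'Y.2.1⟩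
      rw [Finset.card_eq_one] at hcard
      obtain ⟨R₀, hR₀⟩ := hcard
      have h1' : S ×ˢ T ∈ C.filter (fun R => UsesRow R s') :=
        Finset.mem_filter.2 ⟨hR, ⟨t, Set.mk_mem_prod hs' htT⟩⟩
      have h2' : R' ∈ C.filter (fun R => UsesRow R s') :=
        Finset.mem_filter.2 ⟨hR'C, ⟨t', hR'mem⟩⟩
      rw [hR₀, Finset.mem_singleton] at h1' h2'
      have hmem2 : (s', t') ∈ S ×ˢ T := by rw [h1', ← h2']; exact hR'mem
      exact hmem2.2
  have hsY := mem_Yd_iff.1 (hYmem s hsS t htT)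
  refine ⟨s, ⟨hsY.1, hsY.2.1⟩, ?_⟩
  have hSeq : S = {s} := by
    ext s'
    simp only [Set.mem_singleton_iff]
    constructor
    · intro hs'
      have h1 := key s hsS
      have h2 := key s' hs'
      have hs'Y := mem_Yd_iff.1 (hYmem s' hs' t htT)
      have hmem : z + 1 - s ∈ Set.Icc 1 (z + 1 - s) := by
        simp only [Set.mem_Icc]; omega
      rw [← h1, h2] at hmem
      have hmem' : z + 1 - s' ∈ Set.Icc 1 (z + 1 - s') := by
        simp only [Set.mem_Icc]; omega
      rw [← h2, h1] at hmem'
      simp only [Set.mem_Icc] at hmem hmem'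
      omega
    · intro h; subst h; exact hsS
  rw [hSeq, key s hsS]

lemma rect_mem_aux (z s : ℕ) (hs1 : 1 ≤ s) (hsz : s ≤ z) :
    (s, 1) ∈ (({s} : Set ℕ) ×ˢ Set.Icc 1 (z + 1 - s)) := by
  refine ⟨rfl, ?_⟩
  simp only [Set.mem_Icc]
  omega

lemma col_count_aux (z : ℕ) (C : Finset (Set (ℕ × ℕ))) (hC : IsCover (Yd z) C)
    (hrow : ∀ s ∈ Set.Icc 1 z, (C.filter (fun R => UsesRow R s)).card = 1) :
    (C.filter (fun R => UsesCol R 1)).card = z := by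
  have hstr := struct_aux z C hC hrow
  have himg : C.filter (fun R => UsesCol R 1)
      = (Finset.Icc 1 z).image (fun s => ({s} : Set ℕ) ×ˢ Set.Icc 1 (z + 1 - s)) := by
    ext R
    simp only [Finset.mem_filter, Finset.mem_image, Finset.mem_Icc]
    constructor
    · rintro ⟨hRC, s0, hs0⟩
      obtain ⟨s, hs, rfl⟩ := hstr R hRC ⟨(s0, 1), hs0⟩
      rw [Set.mem_Icc] at hs
      exact ⟨s, hs, rfl⟩
    · rintro ⟨s, hs, rfl⟩
      have hY : (s, 1) ∈ Yd z := mem_Yd_iff.2 (by omega)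
      have hmem := hY
      rw [← hC.2] at hmem
      simp only [Set.mem_iUnion] at hmem
      obtain ⟨R', hR'C, hR'mem⟩ := hmem
      obtain ⟨s', hs', hR'eq⟩ := hstr R' hR'C ⟨(s, 1), hR'mem⟩
      rw [hR'eq] at hR'mem
      have : s = s' := hR'mem.1
      subst this
      rw [← hR'eq]
      exact ⟨hR'C, s, by rw [hR'eq]; exact rect_mem_aux z s hs.1 hs.2⟩
  rw [himg, Finset.card_image_of_injOn, Nat.card_Icc]
  · omega
  · intro s1 h1 s2 h2 heq
    simp only [Finset.coe_Icc, Set.mem_Icc] at h1 h2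
    have h3 := rect_mem_aux z s1 h1.1 h1.2
    simp only at heq
    rw [heq] at h3
    exact h3.1

lemma exists_cover_aux (j z : ℕ) (hzj : z ≤ j) :
    ∃ C : Finset (Set (ℕ × ℕ)), IsLocalCover 1 j (Yd z) C := by
  refine ⟨(Finset.Icc 1 z).image (fun s => ({s} : Set ℕ) ×ˢ Set.Icc 1 (z + 1 - s)),
    ⟨?_, ?_⟩, ?_, ?_⟩
  · intro R hR
    simp only [Finset.mem_image, Finset.mem_Icc] at hR
    obtain ⟨s, hs, rfl⟩ := hR
    refine ⟨⟨{s}, Set.Icc 1 (z + 1 - s), rfl⟩, ?_⟩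
    rintro ⟨a, b⟩ ⟨ha, hb⟩
    simp only [Set.mem_singleton_iff] at ha
    simp only [Set.mem_Icc] at hb
    subst ha
    exact mem_Yd_iff.2 (by omega)
  · ext ⟨a, b⟩
    simp only [Set.mem_iUnion, Finset.mem_image, Finset.mem_Icc, mem_Yd_iff]
    constructor
    · rintro ⟨R, ⟨s, hs, rfl⟩, ha, hb⟩
      simp only [Set.mem_singleton_iff] at ha
      simp only [Set.mem_Icc] at hb
      subst ha
      omega
    · intro h
      refine ⟨_, ⟨a, by omega, rfl⟩, rfl, ?_⟩
      simp only [Set.mem_Icc]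
      omega
  · intro s
    rw [Finset.card_le_one]
    intro R hR R' hR'
    simp only [Finset.mem_filter, Finset.mem_image, Finset.mem_Icc] at hR hR'
    obtain ⟨⟨s1, hs1, rfl⟩, t1, ht1⟩ := hR
    obtain ⟨⟨s2, hs2, rfl⟩, t2, ht2⟩ := hR'
    have e1 : s = s1 := ht1.1
    have e2 : s = s2 := ht2.1
    rw [← e1, ← e2]
  · intro t
    calc (Finset.filter (fun R => UsesCol R t) _).card
        ≤ ((Finset.Icc 1 z).image (fun s => ({s} : Set ℕ) ×ˢ Set.Icc 1 (z + 1 - s))).card :=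
          Finset.card_filter_le _ _
      _ ≤ (Finset.Icc 1 z).card := Finset.card_image_le
      _ = z := by rw [Nat.card_Icc]; omega
      _ ≤ j := hzj

end Aux

theorem one_local_cover_iff (j z : ℕ) :
    ((∃ C : Finset (Set (ℕ × ℕ)), IsLocalCover 1 j (Yd z) C) ↔ z ≤ j) ∧
    (∀ C : Finset (Set (ℕ × ℕ)), IsCover (Yd z) C →
      (∀ s ∈ Set.Icc 1 z, (C.filter (fun R => UsesRow R s)).card = 1) →
      ((∀ R ∈ C, R.Nonempty → ∃ s ∈ Set.Icc 1 z, R = ({s} : Set ℕ) ×ˢ Set.Icc 1 (z + 1 - s)) ∧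
       (C.filter (fun R => UsesCol R 1)).card = z)) := by
  constructor
  · constructor
    · rintro ⟨C, ⟨hcov, hloc⟩⟩
      by_cases hz : z = 0
      · omega
      · have hrow : ∀ s ∈ Set.Icc 1 z, (C.filter (fun R => UsesRow R s)).card = 1 := by
          intro s hs
          rw [Set.mem_Icc] at hs
          refine le_antisymm (hloc.1 s) ?_
          have hY : (s, 1) ∈ Yd z := mem_Yd_iff.2 (by omega)
          rw [← hcov.2] at hY
          simp only [Set.mem_iUnion] at hY
          obtain ⟨R, hRC, hRmem⟩ := hY
          have : R ∈ C.filter (fun R => UsesRow R s) :=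
            Finset.mem_filter.2 ⟨hRC, ⟨1, hRmem⟩⟩
          exact Finset.card_pos.2 ⟨R, this⟩
        have hcol := col_count_aux z C hcov hrow
        have := hloc.2 1
        omega
    · exact exists_cover_aux j z
  · intro C hcov hrow
    exact ⟨struct_aux z C hcov hrow, col_count_aux z C hcov hrow⟩
end

section
/- For every difference graph H, the local complete-bipartite covering number of H equals the least k such that z < C(2k,k), where z is the number of distinct neighborhood sizes among the vertices of one partite set of H. -/
open scoped Classical

/-- A set of complete bipartite subgraphs (pairs `(S,T)` with all pairs adjacent)
whose union is the bipartite graph given by the relation `E`. -/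
def CBCover {α β : Type*} (E : α → β → Prop) (C : Finset (Set α × Set β)) : Prop :=
  (∀ P ∈ C, ∀ a ∈ P.1, ∀ b ∈ P.2, E a b) ∧
  (∀ a b, E a b → ∃ P ∈ C, a ∈ P.1 ∧ b ∈ P.2)

/-- Every vertex lies in at most `k` of the covering subgraphs. -/
def CBLocal {α β : Type*} (C : Finset (Set α × Set β)) (k : ℕ) : Prop :=
  (∀ a, (C.filter (fun P => a ∈ P.1)).card ≤ k) ∧
  (∀ b, (C.filter (fun P => b ∈ P.2)).card ≤ k)

open Finset

/-!
Up to twins and isolated vertices, a difference graph with `z` distinct nonempty neighbourhoods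
is the half graph on `z` levels: `a` sees `b` iff the level of `b` is at most that of `a`.

Lower bound: take a vertex `x i` on each level on the left and a neighbour `y j` of `x j` seen by
no lower level. In a `k`-local cover the rectangles through `x i`, resp. `y j`, form sets `A i`,
`B j` of size at most `k` that meet iff `j ≤ i`; shifting the indices by one gives `z + 1` skew
Bollobás pairs, so `z + 1 ≤ C(2k, k)` by Lovász's argument: placed on the moment curve, the
wedges of the first sets pair triangularly with the second sets (a shared point repeats a row,
disjointness gives a nonzero Vandermonde determinant), hence are independent in `⋀^k ℝ^(2k)`.

Upper bound: in colex order `t < s` iff some `w ∈ s \ t` has the same elements above it in `s`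
and in `t`, so the rectangles indexed by the pairs `(w, tail)` cover the strict colex order on
the `k`-subsets of a `2k`-set, each `k`-set lying in exactly `k` of them; this cover of a chain
of length `C(2k, k)` pulls back along the levels of the difference graph.
-/

namespace AlternatingMap

variable {R M N ι κ : Type*} [Semiring R] [AddCommMonoid M] [Module R M] [AddCommMonoid N]
  [Module R N]

def sumElimRight (f : M [⋀^(ι ⊕ κ)]→ₗ[R] N) (w : κ → M) : M [⋀^ι]→ₗ[R] N where
  toFun v := f (Sum.elim v w)
  map_update_add' v i x y := by
    classical
    simp only [Sum.elim_update_left, f.map_update_add]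
  map_update_smul' v i c x := by
    classical
    simp only [Sum.elim_update_left, f.map_update_smul]
  map_eq_zero_of_eq' v i j h hij :=
    f.map_eq_zero_of_eq _ (i := .inl i) (j := .inl j) h (by simpa using hij)

@[simp]
theorem sumElimRight_apply (f : M [⋀^(ι ⊕ κ)]→ₗ[R] N) (w : κ → M) (v : ι → M) :
    f.sumElimRight w v = f (Sum.elim v w) := rfl

end AlternatingMap

theorem linearIndependent_of_isUpperTriangular {K V ι : Type*} [Field K] [AddCommGroup V]
    [Module K V] [Fintype ι] [LinearOrder ι] (v : ι → V) (ℓ : ι → Module.Dual K V)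
    (hlt : ∀ i j, j < i → ℓ i (v j) = 0) (hdiag : ∀ i, ℓ i (v i) ≠ 0) :
    LinearIndependent K v := by
  set A : Matrix ι ι K := Matrix.of fun i j => ℓ i (v j)
  have hA : A.det ≠ 0 := by
    rw [Matrix.det_of_isUpperTriangular (M := A) fun i j h => hlt i j h]
    exact prod_ne_zero_iff.2 fun i _ => hdiag i
  refine Fintype.linearIndependent_iff.2 fun g hg =>
    congrFun (Matrix.eq_zero_of_mulVec_eq_zero hA ?_)
  ext i
  simpa [A, Matrix.mulVec, dotProduct, mul_comm] using congrArg (ℓ i) hg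

def momentCurve {R : Type*} [CommRing R] (n : ℕ) (x : R) : Fin n → R := fun j => x ^ (j : ℕ)

def momentDet (R : Type*) [CommRing R] (p q : ℕ) :
    (Fin (p + q) → R) [⋀^(Fin p ⊕ Fin q)]→ₗ[R] R :=
  Matrix.detRowAlternating.domDomCongr finSumFinEquiv.symm

theorem momentDet_momentCurve_ne_zero_iff {R : Type*} [CommRing R] [IsDomain R] {p q : ℕ}
    (r : Fin p ⊕ Fin q → R) :
    momentDet R p q (momentCurve (p + q) ∘ r) ≠ 0 ↔ Function.Injective r := by
  rw [momentDet, AlternatingMap.domDomCongr_apply, ← finSumFinEquiv.symm.injective_comp]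
  exact Matrix.det_vandermonde_ne_zero_iff

theorem card_le_choose_of_skew_tuples {K ι : Type*} [Field K] [Fintype ι] [LinearOrder ι]
    {p q : ℕ} (x : ι → Fin p → K) (y : ι → Fin q → K)
    (hlt : ∀ i j, i < j → ∃ a b, x i a = y j b)
    (hdiag : ∀ i, Function.Injective (Sum.elim (x i) (y i))) :
    Fintype.card ι ≤ (p + q).choose p := by
  have hpair : ∀ i j, exteriorPower.alternatingMapLinearEquiv
      ((momentDet K p q).sumElimRight (momentCurve (p + q) ∘ y j))
        (exteriorPower.ιMulti K p (momentCurve (p + q) ∘ x i)) ≠ 0 ↔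
      Function.Injective (Sum.elim (x i) (y j)) := by
    intro i j
    rw [exteriorPower.alternatingMapLinearEquiv_apply_ιMulti,
      AlternatingMap.sumElimRight_apply, ← Sum.comp_elim, momentDet_momentCurve_ne_zero_iff]
  have hli := linearIndependent_of_isUpperTriangular
    (fun i => exteriorPower.ιMulti K p (momentCurve (p + q) ∘ x i))
    (fun j => exteriorPower.alternatingMapLinearEquiv
      ((momentDet K p q).sumElimRight (momentCurve (p + q) ∘ y j)))
    (fun j i hij => by
      rw [← not_ne_iff, hpair]
      obtain ⟨a, b, hab⟩ := hlt i j hij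
      exact fun h => Sum.inl_ne_inr (h (a₁ := .inl a) (a₂ := .inr b) hab))
    (fun i => (hpair i i).2 (hdiag i))
  have := hli.fintype_card_le_finrank
  rwa [exteriorPower.finrank_eq, Module.finrank_fin_fun] at this

theorem card_le_choose_of_skew_pairs {γ ι : Type*} [Fintype ι] [LinearOrder ι] {p q : ℕ}
    (C D : ι → Finset γ) (hC : ∀ i, #(C i) = p) (hD : ∀ i, #(D i) = q)
    (hlt : ∀ i j, i < j → ¬Disjoint (C i) (D j)) (hdiag : ∀ i, Disjoint (C i) (D i)) :
    Fintype.card ι ≤ (p + q).choose p := by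
  set F := fun i => C i ∪ D i
  set U := univ.biUnion F
  obtain ⟨f, hf⟩ := Set.countable_iff_exists_injOn.1 (U : Set γ).toFinite.countable
  have ht : Set.InjOn ((↑) ∘ f : γ → ℝ) U := Nat.cast_injective.comp_injOn hf
  have hCU i : C i ⊆ U := subset_union_left.trans (subset_biUnion_of_mem F (mem_univ i))
  have hDU i : D i ⊆ U := subset_union_right.trans (subset_biUnion_of_mem F (mem_univ i))
  set eC := fun i => ((C i).equivFinOfCardEq (hC i)).symm
  set eD := fun i => ((D i).equivFinOfCardEq (hD i)).symm
  refine card_le_choose_of_skew_tuples (fun i a => ((↑) ∘ f : γ → ℝ) (eC i a))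
    (fun j b => ((↑) ∘ f : γ → ℝ) (eD j b)) (fun i j hij => ?_) (fun i => ?_)
  · obtain ⟨c, hcC, hcD⟩ := not_disjoint_iff.1 (hlt i j hij)
    exact ⟨(eC i).symm ⟨c, hcC⟩, (eD j).symm ⟨c, hcD⟩, by simp⟩
  · refine Function.Injective.sumElim (fun a a' h => ?_) (fun b b' h => ?_) fun a b h => ?_
    · exact (eC i).injective (Subtype.ext (ht (hCU i (coe_mem _)) (hCU i (coe_mem _)) h))
    · exact (eD i).injective (Subtype.ext (ht (hDU i (coe_mem _)) (hDU i (coe_mem _)) h))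
    · refine disjoint_left.1 (hdiag i) (coe_mem (eC i a)) ?_
      rw [ht (hCU i (coe_mem _)) (hDU i (coe_mem _)) h]
      exact coe_mem _

noncomputable def pad {γ τ : Type*} (s : Finset γ) (n : ℕ) (a : τ) :
    Finset (γ ⊕ τ × ℕ) :=
  s.map .inl ∪ (range (n - #s)).map ((Function.Embedding.sectR a ℕ).trans .inr)

theorem card_pad {γ τ : Type*} {s : Finset γ} {n : ℕ} (h : #s ≤ n) (a : τ) :
    #(pad s n a) = n := by
  rw [pad, card_union_of_disjoint (by simp [disjoint_left]), card_map, card_map, card_range]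
  omega

theorem disjoint_pad_pad_iff {γ τ : Type*} {s t : Finset γ} {m n : ℕ} {a b : τ}
    (hab : a ≠ b) :
    Disjoint (pad s m a) (pad t n b) ↔ Disjoint s t := by
  simp [pad, disjoint_left, hab.symm]

theorem card_le_choose_of_skew_pairs_of_card_le {γ ι : Type*} [Fintype ι] [LinearOrder ι]
    {p q : ℕ} (C D : ι → Finset γ) (hC : ∀ i, #(C i) ≤ p) (hD : ∀ i, #(D i) ≤ q)
    (hlt : ∀ i j, i < j → ¬Disjoint (C i) (D j)) (hdiag : ∀ i, Disjoint (C i) (D i)) :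
    Fintype.card ι ≤ (p + q).choose p :=
  card_le_choose_of_skew_pairs (fun i => pad (C i) p (Sum.inl i : ι ⊕ ι))
    (fun j => pad (D j) q (Sum.inr j : ι ⊕ ι)) (fun i => card_pad (hC i) _)
    (fun j => card_pad (hD j) _)
    (fun i j hij => by rw [disjoint_pad_pad_iff Sum.inl_ne_inr]; exact hlt i j hij)
    (fun i => by rw [disjoint_pad_pad_iff Sum.inl_ne_inr]; exact hdiag i)

theorem lt_choose_of_staircase {γ : Type*} {p q z : ℕ} (A B : Fin z → Finset γ)
    (hA : ∀ i, #(A i) ≤ p) (hB : ∀ j, #(B j) ≤ q)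
    (hAB : ∀ i j, ¬Disjoint (A i) (B j) ↔ j ≤ i) :
    z < (p + q).choose p := by
  -- the pairs `(B j, A (j - 1))` for `j ≤ z`, with `B z = A (-1) = ∅`
  set C : Fin (z + 1) → Finset γ := Fin.snoc B ∅
  set D : Fin (z + 1) → Finset γ := Fin.cons ∅ A
  have hC : ∀ i, #(C i) ≤ q := Fin.lastCases (by simp [C]) fun i => by simpa [C] using hB i
  have hD : ∀ i, #(D i) ≤ p := Fin.cases (by simp [D]) fun i => by simpa [D] using hA i
  have hlt : ∀ i j, i < j → ¬Disjoint (C i) (D j) := by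
    intro i j hij
    induction j using Fin.cases with
    | zero => exact absurd hij (Fin.not_lt_zero i)
    | succ j =>
      induction i using Fin.lastCases with
      | last => exact absurd hij (Fin.le_last _).not_gt
      | cast i =>
        simpa [C, D, disjoint_comm] using (hAB j i).2 (Fin.castSucc_lt_succ_iff.1 hij)
  have hdiag : ∀ i, Disjoint (C i) (D i) := by
    intro i
    induction i using Fin.lastCases with
    | last => simp [C]
    | cast i =>
      obtain h | ⟨j, h⟩ := Fin.eq_zero_or_eq_succ i.castSucc
      · simp [D, h]
      · have hji : ¬i ≤ j := by
          have := congrArg Fin.val h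
          simp only [Fin.val_castSucc, Fin.val_succ] at this
          rw [Fin.le_iff_val_le_val]
          omega
        have hDi : D i.castSucc = A j := by rw [h]; exact Fin.cons_succ _ _ _
        rw [hDi, show C i.castSucc = B i from Fin.snoc_castSucc _ _ _, disjoint_comm]
        exact not_not.1 ((hAB j i).not.2 hji)
  have := card_le_choose_of_skew_pairs_of_card_le C D hC hD hlt hdiag
  rw [Fintype.card_fin, add_comm q, ← Nat.choose_symm_add] at this
  exact this

noncomputable def rectComap {α α' β β' : Type*} (f : α → α') (g : β → β')
    (C : Finset (Set α' × Set β')) : Finset (Set α × Set β) :=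
  C.image fun P => (f ⁻¹' P.1, g ⁻¹' P.2)

theorem card_filter_mem_fst_rectComap_le {α α' β β' : Type*} (f : α → α') (g : β → β')
    (C : Finset (Set α' × Set β')) (a : α) :
    #{P ∈ rectComap f g C | a ∈ P.1} ≤ #{P ∈ C | f a ∈ P.1} := by
  rw [rectComap, filter_image]
  exact card_image_le

theorem card_filter_mem_snd_rectComap_le {α α' β β' : Type*} (f : α → α') (g : β → β')
    (C : Finset (Set α' × Set β')) (b : β) :
    #{P ∈ rectComap f g C | b ∈ P.2} ≤ #{P ∈ C | g b ∈ P.2} := by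
  rw [rectComap, filter_image]
  exact card_image_le

namespace CBCover

variable {α β : Type*} {E : α → β → Prop} {C : Finset (Set α × Set β)}

theorem comap {α' β' : Type*} {E' : α' → β' → Prop} {C' : Finset (Set α' × Set β')}
    (hC' : CBCover E' C') (f : α → α') (g : β → β')
    (hfg : ∀ a b, E a b ↔ E' (f a) (g b)) :
    CBCover E (rectComap f g C') := by
  refine ⟨?_, fun a b hab => ?_⟩
  · simp only [rectComap, mem_image]
    rintro _ ⟨P, hP, rfl⟩ a ha b hb
    exact (hfg a b).2 (hC'.1 P hP _ ha _ hb)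
  · obtain ⟨P, hP, ha, hb⟩ := hC'.2 _ _ ((hfg a b).1 hab)
    exact ⟨_, mem_image_of_mem _ hP, ha, hb⟩

theorem not_disjoint_filter_iff (hC : CBCover E C) (a : α) (b : β) :
    ¬Disjoint {P ∈ C | a ∈ P.1} {P ∈ C | b ∈ P.2} ↔ E a b := by
  simp only [not_disjoint_iff, mem_filter]
  constructor
  · rintro ⟨P, ⟨hP, ha⟩, -, hb⟩
    exact hC.1 P hP a ha b hb
  · intro hab
    obtain ⟨P, hP, ha, hb⟩ := hC.2 a b hab
    exact ⟨P, ⟨hP, ha⟩, hP, hb⟩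

end CBCover

section Colex

variable {σ : Type*} [Fintype σ] [LinearOrder σ]

def colexRect (w : σ) (X : Finset σ) : Set (Colex (Finset σ)) × Set (Colex (Finset σ)) :=
  ({s | w ∈ ofColex s ∧ {a ∈ ofColex s | w < a} = X},
    {t | w ∉ ofColex t ∧ {a ∈ ofColex t | w < a} = X})

noncomputable def colexCover : Finset (Set (Colex (Finset σ)) × Set (Colex (Finset σ))) :=
  univ.image fun e : σ × Finset σ => colexRect e.1 e.2

theorem cbCover_colexCover :
    CBCover (fun s t : Colex (Finset σ) => t < s) (colexCover (σ := σ)) := by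
  refine ⟨?_, fun s t hts => ?_⟩
  · simp only [colexCover, mem_image, mem_univ, true_and, Prod.exists]
    rintro _ ⟨w, X, rfl⟩ s ⟨hws, hs⟩ t ⟨hwt, ht⟩
    rw [← toColex_ofColex s, ← toColex_ofColex t, Colex.lt_iff_exists_filter_lt]
    exact ⟨w, mem_sdiff.2 ⟨hws, hwt⟩, ht.trans hs.symm⟩
  · rw [← toColex_ofColex s, ← toColex_ofColex t, Colex.lt_iff_exists_filter_lt] at hts
    obtain ⟨w, hw, hX⟩ := hts
    rw [mem_sdiff] at hw
    exact ⟨colexRect w {a ∈ ofColex s | w < a}, mem_image_of_mem _ (mem_univ (w, _)),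
      ⟨hw.1, rfl⟩, ⟨hw.2, hX⟩⟩

theorem card_filter_mem_fst_colexCover_le (s : Colex (Finset σ)) :
    #{P ∈ colexCover | s ∈ P.1} ≤ #(ofColex s) := by
  refine (card_le_card fun P hP => ?_).trans
    (card_image_le (s := ofColex s) (f := fun w => colexRect w {a ∈ ofColex s | w < a}))
  simp only [colexCover, mem_filter, mem_image, mem_univ, true_and, Prod.exists] at hP
  obtain ⟨⟨w, X, rfl⟩, hws, hX⟩ := hP
  exact mem_image.2 ⟨w, hws, by rw [hX]⟩

theorem card_filter_mem_snd_colexCover_le (t : Colex (Finset σ)) :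
    #{P ∈ colexCover | t ∈ P.2} ≤ Fintype.card σ - #(ofColex t) := by
  rw [← card_compl]
  refine (card_le_card fun P hP => ?_).trans
    (card_image_le (s := (ofColex t)ᶜ) (f := fun w => colexRect w {a ∈ ofColex t | w < a}))
  simp only [colexCover, mem_filter, mem_image, mem_univ, true_and, Prod.exists] at hP
  obtain ⟨⟨w, X, rfl⟩, hwt, hX⟩ := hP
  exact mem_image.2 ⟨w, mem_compl.2 hwt, by rw [hX]⟩

end Colex

def IsDifferenceGraph {α β : Type*} (E : α → β → Prop) : Prop :=
  ∀ a a' : α, {b | E a b} ⊆ {b | E a' b} ∨ {b | E a' b} ⊆ {b | E a b}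

noncomputable def posDegrees {α β : Type*} [Fintype α] (E : α → β → Prop) : Finset ℕ :=
  {n ∈ univ.image fun a => {b | E a b}.ncard | 0 < n}

theorem mem_posDegrees {α β : Type*} [Fintype α] {E : α → β → Prop} {n : ℕ} :
    n ∈ posDegrees E ↔ 0 < n ∧ ∃ a, {b | E a b}.ncard = n := by
  rw [posDegrees, mem_filter, mem_image, and_comm]
  simp only [mem_univ, true_and]

theorem coe_posDegrees {α β : Type*} [Fintype α] (E : α → β → Prop) :
    (posDegrees E : Set ℕ) = {n | 0 < n ∧ ∃ a, n = {b | E a b}.ncard} := by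
  ext n
  simp only [mem_coe, mem_posDegrees, Set.mem_ofPred_eq, eq_comm]

namespace IsDifferenceGraph

variable {α β : Type*} [Finite β] {E : α → β → Prop}

theorem subset_iff_ncard_le (hE : IsDifferenceGraph E) (a a' : α) :
    {b | E a b} ⊆ {b | E a' b} ↔ {b | E a b}.ncard ≤ {b | E a' b}.ncard := by
  refine ⟨fun h => Set.ncard_le_ncard h (Set.toFinite _), fun hle => ?_⟩
  rcases hE a a' with h | h
  · exact h
  · exact (Set.eq_of_subset_of_ncard_le h hle (Set.toFinite _)).symm.subset

variable [Fintype α]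

theorem exists_private_neighbor (hE : IsDifferenceGraph E) {a : α}
    (ha : 0 < {b | E a b}.ncard) :
    ∃ b, ∀ a', E a' b ↔ {b | E a b}.ncard ≤ {b | E a' b}.ncard := by
  suffices ∃ b, E a b ∧ ∀ a', {b | E a' b}.ncard < {b | E a b}.ncard → ¬E a' b by
    obtain ⟨b, hab, hb⟩ := this
    exact ⟨b, fun a' => ⟨fun h => not_lt.1 fun hlt => hb a' hlt h,
      fun hle => (hE.subset_iff_ncard_le a a').2 hle hab⟩⟩
  by_cases hs : ∃ a', {b | E a' b}.ncard < {b | E a b}.ncard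
  · obtain ⟨a₀, ha₀, hmax⟩ := exists_max_image
      {a' | {b | E a' b}.ncard < {b | E a b}.ncard} (fun a' => {b | E a' b}.ncard)
      (hs.imp fun a' ha' => mem_filter.2 ⟨mem_univ _, ha'⟩)
    rw [mem_filter] at ha₀
    obtain ⟨b, hab, hb⟩ := Set.not_subset.1
      (mt (hE.subset_iff_ncard_le a a₀).1 (not_le.2 ha₀.2))
    refine ⟨b, hab, fun a' ha' hb' => hb ?_⟩
    exact (hE.subset_iff_ncard_le a' a₀).2 (hmax a' (by simpa using ha')) hb'
  · push Not at hs
    obtain ⟨b, hb⟩ := Set.nonempty_of_ncard_ne_zero ha.ne'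
    exact ⟨b, hb, fun a' ha' => absurd (hs a') (not_le.2 ha')⟩

theorem exists_staircase (hE : IsDifferenceGraph E) :
    ∃ (x : Fin #(posDegrees E) → α) (y : Fin #(posDegrees E) → β),
      ∀ i j, E (x i) (y j) ↔ j ≤ i := by
  set g := (posDegrees E).orderEmbOfFin rfl
  have hg : ∀ i, 0 < g i ∧ ∃ a, {b | E a b}.ncard = g i := fun i =>
    mem_posDegrees.1 ((posDegrees E).orderEmbOfFin_mem rfl i)
  choose x hx using fun i => (hg i).2
  choose y hy using fun j => hE.exists_private_neighbor ((hx j).symm ▸ (hg j).1)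
  exact ⟨x, y, fun i j => by rw [hy j, hx, hx, g.le_iff_le]⟩

theorem exists_levels (hE : IsDifferenceGraph E) :
    ∃ (r : α → Fin (#(posDegrees E) + 1)) (l : β → Fin (#(posDegrees E) + 1)),
      ∀ a b, E a b ↔ l b < r a := by
  set Z := posDegrees E
  refine ⟨fun a => ⟨#{n ∈ Z | n ≤ {b | E a b}.ncard},
      Nat.lt_succ_of_le (card_filter_le _ _)⟩,
    fun b => ⟨#{n ∈ Z | ∀ a', E a' b → n < {b | E a' b}.ncard},
      Nat.lt_succ_of_le (card_filter_le _ _)⟩, fun a b => ?_⟩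
  rw [Fin.mk_lt_mk]
  constructor
  · intro hab
    have hZ : {b | E a b}.ncard ∈ Z :=
      mem_posDegrees.2 ⟨(Set.ncard_pos (Set.toFinite _)).2 ⟨b, hab⟩, a, rfl⟩
    refine card_lt_card ((ssubset_iff_of_subset fun n hn => ?_).2 ⟨{b | E a b}.ncard, ?_, ?_⟩)
    · rw [mem_filter] at hn ⊢
      exact ⟨hn.1, (hn.2 a hab).le⟩
    · exact mem_filter.2 ⟨hZ, le_rfl⟩
    · exact fun h => lt_irrefl _ ((mem_filter.1 h).2 a hab)
  · refine fun hlt => not_not.1 fun hab => hlt.not_ge (card_le_card fun n hn => ?_)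
    rw [mem_filter] at hn ⊢
    refine ⟨hn.1, fun a' ha' => not_le.1 fun hle => hab ?_⟩
    exact (hE.subset_iff_ncard_le a' a).2 (hle.trans hn.2) ha'

theorem lt_choose_of_cbCover (hE : IsDifferenceGraph E) {C : Finset (Set α × Set β)} {k : ℕ}
    (hC : CBCover E C) (hk : CBLocal C k) : #(posDegrees E) < (2 * k).choose k := by
  obtain ⟨x, y, hxy⟩ := hE.exists_staircase
  rw [two_mul]
  exact lt_choose_of_staircase (fun i => {P ∈ C | x i ∈ P.1}) (fun j => {P ∈ C | y j ∈ P.2})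
    (fun i => hk.1 _) (fun j => hk.2 _) fun i j => (hC.not_disjoint_filter_iff _ _).trans (hxy i j)

theorem exists_cbCover_of_lt_choose (hE : IsDifferenceGraph E) {k : ℕ}
    (hz : #(posDegrees E) < (2 * k).choose k) :
    ∃ C : Finset (Set α × Set β), CBCover E C ∧ CBLocal C k := by
  obtain ⟨r, l, hrl⟩ := hE.exists_levels
  set 𝒦 := (powersetCard k (univ : Finset (Fin (2 * k)))).map toColex.toEmbedding
  have h𝒦 : #𝒦 = (2 * k).choose k := by simp [𝒦]
  set e : Fin (#(posDegrees E) + 1) ↪o Colex (Finset (Fin (2 * k))) :=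
    (Fin.castLEOrderEmb hz).trans (𝒦.orderEmbOfFin h𝒦)
  have he : ∀ i, #(ofColex (e i)) = k := fun i => by
    obtain ⟨s, hs, hse⟩ := mem_map.1 (𝒦.orderEmbOfFin_mem h𝒦 (Fin.castLE hz i))
    rw [show e i = _ from hse.symm]
    exact (mem_powersetCard.1 hs).2
  refine ⟨rectComap (e ∘ r) (e ∘ l) colexCover, cbCover_colexCover.comap _ _ fun a b => ?_,
    fun a => ?_, fun b => ?_⟩
  · rw [hrl, ← e.lt_iff_lt]
    rfl
  · exact (card_filter_mem_fst_rectComap_le _ _ _ a).trans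
      ((card_filter_mem_fst_colexCover_le _).trans (he _).le)
  · refine (card_filter_mem_snd_rectComap_le _ _ _ b).trans
      ((card_filter_mem_snd_colexCover_le _).trans ?_)
    rw [Function.comp_apply, he, Fintype.card_fin]
    omega

end IsDifferenceGraph

/-- For a difference graph (neighborhoods of one side linearly ordered by inclusion),
the local complete-bipartite covering number equals the least `k` with `z < C(2k,k)`,
where `z` is the number of distinct nonzero neighborhood sizes on that side. -/
theorem local_CB_covering_number_of_difference_graph
    {α β : Type*} [Fintype α] [Fintype β] (E : α → β → Prop)
    (hdiff : ∀ a a' : α, {b | E a b} ⊆ {b | E a' b} ∨ {b | E a' b} ⊆ {b | E a b}) :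
    sInf {k : ℕ | ∃ C : Finset (Set α × Set β), CBCover E C ∧ CBLocal C k} =
    sInf {k : ℕ |
      ({n : ℕ | 0 < n ∧ ∃ a : α, n = {b | E a b}.ncard}).ncard < (2 * k).choose k} := by
  rw [← coe_posDegrees, Set.ncard_coe_finset]
  congr 1
  ext k
  exact ⟨fun ⟨_, hC, hk⟩ => IsDifferenceGraph.lt_choose_of_cbCover hdiff hC hk,
    IsDifferenceGraph.exists_cbCover_of_lt_choose hdiff⟩
end
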